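/- arXiv:1002.1583 — 12 statements merged into one kernel-verified Lean document; each statement's English description precedes it below -/
import Mathlib

section
/- Let T_0 be the set of positions of the s_0 largest coefficients of β in absolute value and A_0 = {j : |β_j| > λσ} with a_0 = |A_0| ≤ s_0. Then for every c' > 1/2, the number of indices j outside T_0 with |β_j| ≥ λσ/√(2c') is at most (2c'−1)(s_0 − a_0). -/
/-!
Split the indices into `A₀`, `T₀ \ A₀` and the set `J` of large coordinates outside `T₀`. On `A₀`
the truncated square `min (β_j², λ²σ²)` equals `λ²σ²`; if `J` is nonempty it contains an index
beyond `T₀`, so by monotonicity every coordinate of `T₀` is at least `λσ/√(2c')` in absolute value,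
as is every coordinate of `J`. Hence the total truncated mass, at most `s₀ λ²σ²`, is at least
`a₀ λ²σ² + (s₀ - a₀ + |J|) λ²σ²/(2c')`, which rearranges to `|J| ≤ (2c' - 1)(s₀ - a₀)`.
-/

open Finset

lemma sq_le_min_sq_of_le_abs {t L b : ℝ} (ht : 0 ≤ t) (htL : t ≤ L) (htb : t ≤ |b|) :
    t ^ 2 ≤ min (b ^ 2) (L ^ 2) :=
  le_min (by rw [← sq_abs b]; exact pow_le_pow_left₀ ht htb 2) (pow_le_pow_left₀ ht htL 2)

lemma card_sdiff_add_card_mul_le {ι : Type*} [Fintype ι] [DecidableEq ι] {f : ι → ℝ}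
    (hf : 0 ≤ f) {A T J : Finset ι} (hAT : A ⊆ T) (hTJ : Disjoint T J) {M m : ℝ}
    (hA : ∀ i ∈ A, M ≤ f i) (hT : ∀ i ∈ T \ A, m ≤ f i) (hJ : ∀ i ∈ J, m ≤ f i)
    (hsum : ∑ i, f i ≤ #T * M) :
    (#(T \ A) + #J) * m ≤ #(T \ A) * M := by
  have hmass : #A * M + #(T \ A) * m + #J * m ≤ ∑ i, f i :=
    calc #A * M + #(T \ A) * m + #J * m
        ≤ ∑ i ∈ A, f i + ∑ i ∈ T \ A, f i + ∑ i ∈ J, f i := by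
          simp only [← nsmul_eq_mul]
          gcongr
          exacts [card_nsmul_le_sum _ _ _ hA, card_nsmul_le_sum _ _ _ hT,
            card_nsmul_le_sum _ _ _ hJ]
      _ = ∑ i ∈ T ∪ J, f i := by rw [add_comm (∑ i ∈ A, f i), sum_sdiff hAT, sum_union hTJ]
      _ ≤ ∑ i, f i := sum_le_univ_sum_of_nonneg hf
  have hcard : (#T : ℝ) = #(T \ A) + #A := by exact_mod_cast (card_sdiff_add_card_eq_card hAT).symm
  rw [hcard] at hsum
  linarith

lemma le_sub_one_mul_of_add_mul_div_le {u k M c : ℝ} (hM : 0 < M) (hc : 0 < c)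
    (h : (u + k) * (M / c) ≤ u * M) : k ≤ (c - 1) * u := by
  rw [mul_div_assoc', div_le_iff₀ hc, mul_right_comm, mul_assoc] at h
  nlinarith [le_of_mul_le_mul_right (by linarith : (u + k) * M ≤ u * c * M) hM]

/-- For every c' > 1/2, the number of indices outside T0 with
|β_j| ≥ λσ/√(2c') is at most (2c'-1)(s0 - a0). -/
theorem stmt1 (p : ℕ) (β : Fin p → ℝ) (lam σ : ℝ) (hlam : 0 < lam) (hσ : 0 < σ)
    (hord : ∀ i j : Fin p, i ≤ j → |β j| ≤ |β i|)
    (s0 a0 : ℕ) (ha0 : a0 ≤ s0)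
    (hs0 : ∑ i, min ((β i) ^ 2) (lam ^ 2 * σ ^ 2) ≤ (s0 : ℝ) * lam ^ 2 * σ ^ 2)
    (hA0 : ∀ j : Fin p, lam * σ < |β j| ↔ (j : ℕ) < a0)
    (T0 : Finset (Fin p)) (hT0 : ∀ j, j ∈ T0 ↔ (j : ℕ) < s0)
    (c' : ℝ) (hc' : 1 / 2 < c')
    (J : Finset (Fin p))
    (hJ : ∀ j, j ∈ J ↔ (j ∉ T0 ∧ lam * σ / Real.sqrt (2 * c') ≤ |β j|)) :
    (J.card : ℝ) ≤ (2 * c' - 1) * ((s0 : ℝ) - (a0 : ℝ)) := by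
  rcases J.eq_empty_or_nonempty with rfl | ⟨j₀, hj₀⟩
  · simpa using mul_nonneg (by linarith : (0 : ℝ) ≤ 2 * c' - 1) (sub_nonneg.2 (Nat.cast_le.2 ha0))
  obtain ⟨hj₀T, hj₀β⟩ := (hJ j₀).1 hj₀
  have hs0j : s0 ≤ j₀ := not_lt.1 fun h ↦ hj₀T ((hT0 j₀).2 h)
  set L := lam * σ
  set t := L / Real.sqrt (2 * c')
  have hL : 0 < L := mul_pos hlam hσ
  have hc : 0 < 2 * c' := by linarith
  have ht : 0 < t := div_pos hL (Real.sqrt_pos.2 hc)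
  have htL : t ≤ L := div_le_self hL.le (Real.one_le_sqrt.2 (by linarith))
  have ht2 : t ^ 2 = L ^ 2 / (2 * c') := by rw [div_pow, Real.sq_sqrt hc.le]
  set A : Finset (Fin p) := {j | (j : ℕ) < a0}
  have hT0eq : T0 = ({j | (j : ℕ) < s0} : Finset (Fin p)) := by ext j; simp [hT0 j]
  have hAT : A ⊆ T0 := fun j hj ↦ (hT0 j).2 ((mem_filter.1 hj).2.trans_le ha0)
  have hTJ : Disjoint T0 J := disjoint_left.2 fun j hjT hjJ ↦ ((hJ j).1 hjJ).1 hjT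
  have hcardT : #T0 = s0 := by rw [hT0eq, Fin.card_filter_val_lt]; omega
  have hcardA : #A = a0 := by rw [Fin.card_filter_val_lt]; omega
  have hmass : ∑ i, min (β i ^ 2) (L ^ 2) ≤ #T0 * L ^ 2 := by
    rw [hcardT, mul_pow]; linarith
  have key := card_sdiff_add_card_mul_le (f := fun i ↦ min (β i ^ 2) (L ^ 2))
    (fun i ↦ le_min (sq_nonneg _) (sq_nonneg _)) hAT hTJ (M := L ^ 2) (m := t ^ 2)
    (fun i hi ↦ sq_le_min_sq_of_le_abs hL.le le_rfl ((hA0 i).2 (mem_filter.1 hi).2).le)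
    (fun i hi ↦ sq_le_min_sq_of_le_abs ht.le htL <| hj₀β.trans <|
      hord i j₀ (Fin.le_def.2 (((hT0 i).1 (mem_sdiff.1 hi).1).le.trans hs0j)))
    (fun j hj ↦ sq_le_min_sq_of_le_abs ht.le htL ((hJ j).1 hj).2) hmass
  rw [card_sdiff_of_subset hAT, hcardT, hcardA, Nat.cast_sub ha0, ht2] at key
  exact le_sub_one_mul_of_add_mul_div_le (pow_pos hL 2) hc key
end

section
/- Suppose the restricted smallest and largest sparse eigenvalues satisfy Λ_min(2s)·n‖υ‖² ≤ ‖Xυ‖² ≤ Λ_max(2s)·n‖υ‖² for all 2s-sparse υ. Then for all disjoint sets I, S_D ⊆ {1,...,p} with |I| + |S_D| ≤ 2s, and all vectors c supported on I, c' supported on S_D, we have |⟨X c, X c'⟩| / n ≤ ((Λ_max(2s) − Λ_min(2s))/2)·‖c‖₂‖c'‖₂. -/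
open Matrix

section DotProduct

variable {ι R : Type*} [Fintype ι]

lemma dotProduct_eq_zero_of_disjoint [NonUnitalNonAssocSemiring R] {u w : ι → R}
    {I J : Finset ι} (hIJ : Disjoint I J) (hu : ∀ j ∉ I, u j = 0) (hw : ∀ j ∉ J, w j = 0) :
    u ⬝ᵥ w = 0 := by
  refine Finset.sum_eq_zero fun j _ => ?_
  by_cases hj : j ∈ I
  · simp [hw j (Finset.disjoint_left.mp hIJ hj)]
  · simp [hu j hj]

lemma add_dotProduct_add_sub_sub_dotProduct_sub [CommRing R] (u w : ι → R) :
    (u + w) ⬝ᵥ (u + w) - (u - w) ⬝ᵥ (u - w) = 4 * (u ⬝ᵥ w) := by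
  simp only [add_dotProduct, dotProduct_add, sub_dotProduct, dotProduct_sub, dotProduct_comm w u]
  ring

lemma add_dotProduct_add_of_dotProduct_eq_zero [CommRing R] {u w : ι → R} (h : u ⬝ᵥ w = 0) :
    (u + w) ⬝ᵥ (u + w) = u ⬝ᵥ u + w ⬝ᵥ w := by
  simp only [add_dotProduct, dotProduct_add, dotProduct_comm w u, h]
  ring

lemma sub_dotProduct_sub_of_dotProduct_eq_zero [CommRing R] {u w : ι → R} (h : u ⬝ᵥ w = 0) :
    (u - w) ⬝ᵥ (u - w) = u ⬝ᵥ u + w ⬝ᵥ w := by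
  simp only [sub_dotProduct, dotProduct_sub, dotProduct_comm w u, h]
  ring

lemma sum_sq_eq_dotProduct_self [CommSemiring R] (v : ι → R) : ∑ i, v i ^ 2 = v ⬝ᵥ v := by
  simp only [dotProduct, sq]

lemma dotProduct_self_nonneg [Ring R] [LinearOrder R] [IsStrictOrderedRing R] (v : ι → R) :
    0 ≤ v ⬝ᵥ v :=
  Finset.sum_nonneg fun i _ => mul_self_nonneg (v i)

end DotProduct

section RestrictedEigenvalue

variable {m ι : Type*} [Fintype m] [Fintype ι]

/-- `lo` and `hi` stand for the paper's `Λ_min(k) n` and `Λ_max(k) n`. -/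
def RestrictedEigenvalueBounds (X : Matrix m ι ℝ) (k : ℕ) (lo hi : ℝ) : Prop :=
  ∀ (v : ι → ℝ) (T : Finset ι), T.card ≤ k → (∀ j ∉ T, v j = 0) →
    lo * (v ⬝ᵥ v) ≤ (X *ᵥ v) ⬝ᵥ (X *ᵥ v) ∧ (X *ᵥ v) ⬝ᵥ (X *ᵥ v) ≤ hi * (v ⬝ᵥ v)

variable {X : Matrix m ι ℝ} {k : ℕ} {lo hi : ℝ} {I J : Finset ι} {u w : ι → ℝ}

/-- Polarization: `4 ⟪Xu, Xw⟫ = ‖X(u + w)‖² - ‖X(u - w)‖²`, and since `u ⊥ w` both `u + w` and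
`u - w` have squared norm `‖u‖² + ‖w‖²`. -/
lemma abs_dotProduct_mulVec_le_of_disjoint (hX : RestrictedEigenvalueBounds X k lo hi)
    (hIJ : Disjoint I J) (hcard : I.card + J.card ≤ k)
    (hu : ∀ j ∉ I, u j = 0) (hw : ∀ j ∉ J, w j = 0) :
    |(X *ᵥ u) ⬝ᵥ (X *ᵥ w)| ≤ (hi - lo) / 4 * (u ⬝ᵥ u + w ⬝ᵥ w) := by
  classical
  have hT : (I ∪ J).card ≤ k := (Finset.card_union_le I J).trans hcard
  have hsupp : ∀ j ∉ I ∪ J, u j = 0 ∧ w j = 0 := fun j hj => by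
    rw [Finset.mem_union, not_or] at hj
    exact ⟨hu j hj.1, hw j hj.2⟩
  have hadd := hX (u + w) (I ∪ J) hT fun j hj => by simp [hsupp j hj]
  have hsub := hX (u - w) (I ∪ J) hT fun j hj => by simp [hsupp j hj]
  have horth := dotProduct_eq_zero_of_disjoint hIJ hu hw
  rw [add_dotProduct_add_of_dotProduct_eq_zero horth] at hadd
  rw [sub_dotProduct_sub_of_dotProduct_eq_zero horth] at hsub
  have hpolar := add_dotProduct_add_sub_sub_dotProduct_sub (X *ᵥ u) (X *ᵥ w)
  rw [← mulVec_add, ← mulVec_sub] at hpolar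
  rw [abs_le]
  constructor <;> linarith [hadd.1, hadd.2, hsub.1, hsub.2]

/-- Homogenize: apply the previous bound to `‖w‖ • u` and `‖u‖ • w`. -/
lemma abs_dotProduct_mulVec_le_mul_sqrt (hX : RestrictedEigenvalueBounds X k lo hi)
    (hIJ : Disjoint I J) (hcard : I.card + J.card ≤ k)
    (hu : ∀ j ∉ I, u j = 0) (hw : ∀ j ∉ J, w j = 0) :
    |(X *ᵥ u) ⬝ᵥ (X *ᵥ w)| ≤ (hi - lo) / 2 * √(u ⬝ᵥ u) * √(w ⬝ᵥ w) := by
  rcases eq_or_ne u 0 with rfl | hu0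
  · simp
  rcases eq_or_ne w 0 with rfl | hw0
  · simp
  set a := √(u ⬝ᵥ u)
  set b := √(w ⬝ᵥ w)
  have ha : 0 < a := Real.sqrt_pos.mpr ((dotProduct_self_nonneg u).lt_of_ne' (by simpa))
  have hb : 0 < b := Real.sqrt_pos.mpr ((dotProduct_self_nonneg w).lt_of_ne' (by simpa))
  have ha2 : u ⬝ᵥ u = a ^ 2 := (Real.sq_sqrt (dotProduct_self_nonneg u)).symm
  have hb2 : w ⬝ᵥ w = b ^ 2 := (Real.sq_sqrt (dotProduct_self_nonneg w)).symm
  have hscaled := abs_dotProduct_mulVec_le_of_disjoint hX hIJ hcard (u := b • u) (w := a • w)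
    (fun j hj => by simp [hu j hj]) (fun j hj => by simp [hw j hj])
  simp only [mulVec_smul, smul_dotProduct, dotProduct_smul, smul_eq_mul, abs_mul,
    abs_of_pos ha, abs_of_pos hb, ha2, hb2] at hscaled
  refine le_of_mul_le_mul_left (a := a * b) ?_ (mul_pos ha hb)
  linarith

end RestrictedEigenvalue

/-- Restricted orthogonality bound from restricted eigenvalue bounds. -/
theorem stmt2 (n p s : ℕ) (X : Matrix (Fin n) (Fin p) ℝ) (Λmin Λmax : ℝ)
    (hn : 0 < n)
    (hRE : ∀ (v : Fin p → ℝ) (T : Finset (Fin p)), T.card ≤ 2 * s →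
      (∀ j ∉ T, v j = 0) →
      Λmin * n * (∑ j, (v j) ^ 2) ≤ ∑ i, (X.mulVec v i) ^ 2 ∧
      (∑ i, (X.mulVec v i) ^ 2) ≤ Λmax * n * (∑ j, (v j) ^ 2))
    (I SD : Finset (Fin p)) (hdisj : Disjoint I SD)
    (hcard : I.card + SD.card ≤ 2 * s)
    (c c' : Fin p → ℝ) (hc : ∀ j ∉ I, c j = 0) (hc' : ∀ j ∉ SD, c' j = 0) :
    |∑ i, (X.mulVec c i) * (X.mulVec c' i)| / n ≤
      (Λmax - Λmin) / 2 * Real.sqrt (∑ j, (c j) ^ 2) * Real.sqrt (∑ j, (c' j) ^ 2) := by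
  have hX : RestrictedEigenvalueBounds X (2 * s) (Λmin * n) (Λmax * n) := by
    intro v T hT hv
    simpa only [sum_sq_eq_dotProduct_self] using hRE v T hT hv
  have hbound := abs_dotProduct_mulVec_le_mul_sqrt hX hdisj hcard hc hc'
  rw [sum_sq_eq_dotProduct_self, sum_sq_eq_dotProduct_self, div_le_iff₀ (by exact_mod_cast hn)]
  calc |(X *ᵥ c) ⬝ᵥ (X *ᵥ c')|
      ≤ (Λmax * n - Λmin * n) / 2 * √(c ⬝ᵥ c) * √(c' ⬝ᵥ c') := hbound
    _ = (Λmax - Λmin) / 2 * √(c ⬝ᵥ c) * √(c' ⬝ᵥ c') * n := by ring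
end

section
/- If Y = Xβ + ε with supp(β) ⊆ I, |I| ≤ 2s, the Gram matrix satisfies Λ_min(|I|) > 0, and ‖Xᵀε/n‖_∞ ≤ λ_{σ,a,p}, then the OLS estimator β̂_I = (X_Iᵀ X_I)^{-1} X_Iᵀ Y satisfies ‖β̂_I − β_I‖₂ ≤ λ_{σ,a,p} √|I| / Λ_min(|I|). -/
/-!
With `v = β̂ - β`, supported in `I`, the normal equations say that `Xᵀ(Xv - ε)` vanishes on `I`,
so `‖Xv‖² = ⟪v, Xᵀε⟫`. The restricted eigenvalue bound gives `Λ n ‖v‖² ≤ ‖Xv‖²`, while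
Cauchy–Schwarz on `I` and the noise bound give `⟪v, Xᵀε⟫ ≤ λ n √|I| ‖v‖`. Dividing by `Λ n ‖v‖`
yields the claim.
-/

open Matrix Finset

theorem Matrix.sum_mulVec_sq_eq_dotProduct {R m n : Type*} [CommSemiring R] [Fintype m] [Fintype n]
    (A : Matrix m n R) (v : n → R) :
    ∑ i, (A *ᵥ v) i ^ 2 = v ⬝ᵥ (Aᵀ *ᵥ (A *ᵥ v)) := by
  simp only [sq]
  change (A *ᵥ v) ⬝ᵥ (A *ᵥ v) = _
  rw [dotProduct_mulVec, mulVec_transpose, dotProduct_comm]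

theorem dotProduct_eq_zero_of_support_subset {R ι : Type*} [CommSemiring R] [Fintype ι]
    {I : Finset ι} {v w : ι → R} (hv : ∀ j ∉ I, v j = 0) (hw : ∀ j ∈ I, w j = 0) :
    v ⬝ᵥ w = 0 :=
  Finset.sum_eq_zero fun j _ => by
    by_cases hj : j ∈ I
    · rw [hw j hj, mul_zero]
    · rw [hv j hj, zero_mul]

theorem sum_sq_eq_of_support_subset {ι : Type*} [Fintype ι] {I : Finset ι} {v : ι → ℝ}
    (hv : ∀ j ∉ I, v j = 0) : ∑ j ∈ I, v j ^ 2 = ∑ j, v j ^ 2 :=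
  Finset.sum_subset (subset_univ I) fun j _ hj => by rw [hv j hj, sq, zero_mul]

theorem dotProduct_le_of_support_subset {ι : Type*} [Fintype ι] {I : Finset ι} {v g : ι → ℝ}
    {c : ℝ} (hc : 0 ≤ c) (hv : ∀ j ∉ I, v j = 0) (hg : ∀ j ∈ I, |g j| ≤ c) :
    v ⬝ᵥ g ≤ c * √(#I) * √(∑ j, v j ^ 2) := by
  have hg_sq : ∑ j ∈ I, g j ^ 2 ≤ #I * c ^ 2 := by
    rw [← nsmul_eq_mul]
    exact sum_le_card_nsmul I _ _ fun j hj => by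
      simpa only [sq_abs] using pow_le_pow_left₀ (abs_nonneg _) (hg j hj) 2
  calc v ⬝ᵥ g = ∑ j ∈ I, v j * g j :=
        (Finset.sum_subset (subset_univ I) fun j _ hj => by rw [hv j hj, zero_mul]).symm
    _ ≤ √(∑ j ∈ I, v j ^ 2) * √(∑ j ∈ I, g j ^ 2) := Real.sum_mul_le_sqrt_mul_sqrt I v g
    _ ≤ √(∑ j, v j ^ 2) * √(#I * c ^ 2) := by
        rw [sum_sq_eq_of_support_subset hv]
        gcongr
    _ = c * √(#I) * √(∑ j, v j ^ 2) := by
        rw [Real.sqrt_mul (Nat.cast_nonneg _), Real.sqrt_sq hc]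
        ring

theorem le_div_of_mul_sq_le_mul {a b x : ℝ} (ha : 0 < a) (hb : 0 ≤ b) (hx : 0 ≤ x)
    (h : a * x ^ 2 ≤ b * x) : x ≤ b / a := by
  rw [le_div_iff₀ ha]
  rcases hx.eq_or_lt with rfl | hx
  · simpa using hb
  · exact le_of_mul_le_mul_right (by linarith) hx

theorem stmt4_general (n p : ℕ) (X : Matrix (Fin n) (Fin p) ℝ) (Y : Fin n → ℝ)
    (β : Fin p → ℝ) (ε : Fin n → ℝ) (hε : ∀ i, ε i = Y i - X.mulVec β i)
    (I : Finset (Fin p)) (hβsupp : ∀ j ∉ I, β j = 0)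
    (Λmin lam : ℝ) (hΛmin : 0 < Λmin) (hlam : 0 < lam) (hn : 0 < n)
    (hRE : ∀ v : Fin p → ℝ, (∀ j ∉ I, v j = 0) →
      Λmin * n * (∑ j, (v j) ^ 2) ≤ ∑ i, (X.mulVec v i) ^ 2)
    (hnoise : ∀ j, |∑ i, X i j * ε i| / n ≤ lam)
    (βhat : Fin p → ℝ) (hβhatsupp : ∀ j ∉ I, βhat j = 0)
    (hnormal : ∀ j ∈ I, ∑ i, X i j * (Y i - X.mulVec βhat i) = 0) :
    Real.sqrt (∑ j, (βhat j - β j) ^ 2) ≤ lam * Real.sqrt (I.card : ℝ) / Λmin := by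
  set v := βhat - β
  change √(∑ j, v j ^ 2) ≤ _
  have hn' : (0 : ℝ) < n := Nat.cast_pos.mpr hn
  have hv : ∀ j ∉ I, v j = 0 := fun j hj => by simp [v, hβsupp j hj, hβhatsupp j hj]
  have hXv : X *ᵥ v = ε - (Y - X *ᵥ βhat) := by
    ext i
    simp only [v, mulVec_sub, Pi.sub_apply, hε]
    ring
  have hresid : ∀ j ∈ I, (Xᵀ *ᵥ (Y - X *ᵥ βhat)) j = 0 := hnormal
  have hXε : ∀ j ∈ I, |(Xᵀ *ᵥ ε) j| ≤ lam * n := fun j _ => (div_le_iff₀ hn').mp (hnoise j)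
  have hT : √(∑ j, v j ^ 2) ^ 2 = ∑ j, v j ^ 2 := Real.sq_sqrt (by positivity)
  have key : Λmin * n * √(∑ j, v j ^ 2) ^ 2 ≤ lam * √(#I) * n * √(∑ j, v j ^ 2) :=
    calc Λmin * n * √(∑ j, v j ^ 2) ^ 2 ≤ ∑ i, (X *ᵥ v) i ^ 2 := hT.symm ▸ hRE v hv
      _ = v ⬝ᵥ (Xᵀ *ᵥ ε) := by
        rw [sum_mulVec_sq_eq_dotProduct, hXv, mulVec_sub, dotProduct_sub,
          dotProduct_eq_zero_of_support_subset hv hresid, sub_zero]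
      _ ≤ lam * n * √(#I) * √(∑ j, v j ^ 2) :=
        dotProduct_le_of_support_subset (by positivity) hv hXε
      _ = lam * √(#I) * n * √(∑ j, v j ^ 2) := by ring
  have hle := le_div_of_mul_sq_le_mul (by positivity) (by positivity) (Real.sqrt_nonneg _) key
  rwa [mul_div_mul_right _ _ hn'.ne'] at hle

/-- ℓ2 loss of the OLS estimator when the chosen model I contains supp(β). -/
theorem stmt4 (n p s : ℕ) (X : Matrix (Fin n) (Fin p) ℝ) (Y : Fin n → ℝ)
    (β : Fin p → ℝ) (ε : Fin n → ℝ) (hε : ∀ i, ε i = Y i - X.mulVec β i)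
    (I : Finset (Fin p)) (hβsupp : ∀ j ∉ I, β j = 0) (hIcard : I.card ≤ 2 * s)
    (Λmin lam : ℝ) (hΛmin : 0 < Λmin) (hlam : 0 < lam) (hn : 0 < n)
    (hRE : ∀ v : Fin p → ℝ, (∀ j ∉ I, v j = 0) →
      Λmin * n * (∑ j, (v j) ^ 2) ≤ ∑ i, (X.mulVec v i) ^ 2)
    (hnoise : ∀ j, |∑ i, X i j * ε i| / n ≤ lam)
    (βhat : Fin p → ℝ) (hβhatsupp : ∀ j ∉ I, βhat j = 0)
    (hnormal : ∀ j ∈ I, ∑ i, X i j * (Y i - X.mulVec βhat i) = 0) :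
    Real.sqrt (∑ j, (βhat j - β j) ^ 2) ≤ lam * Real.sqrt (I.card : ℝ) / Λmin :=
  stmt4_general n p X Y β ε hε I hβsupp Λmin lam hΛmin hlam hn hRE hnoise βhat hβhatsupp hnormal
end

section
/- OLS with missing variables: suppose Y = Xβ + ε, I ⊆ {1,...,p}, S_D = supp(β) \ I with I ∩ S_D = ∅ and |I ∪ S_D| ≤ 2s. If the restricted eigenvalue bounds hold and ‖Xᵀε/n‖_∞ ≤ λ_{σ,a,p}, then for β̂_I = (X_Iᵀ X_I)^{-1} X_Iᵀ Y (extended by zero outside I), ‖β̂_I − β‖₂² ≤ (θ_{|I|,|S_D|}·‖β_{S_D}‖₂ + λ_{σ,a,p}·√|I|)² / Λ_min(|I|)² + ‖β_{S_D}‖₂². -/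
/-!
Split the error as `β̂ - β = u - v`, where `u = β̂ - β` on `I` and `v = β` on `S_D`; the two pieces
have disjoint supports, so the squared error is `‖u‖² + ‖β_{S_D}‖²`. The normal equations say the
residual `Y - Xβ̂ = ε - Xu + Xv` is orthogonal to `Xu`, hence `‖Xu‖² = ⟨u, Xᵀε⟩ + ⟨Xu, Xv⟩`. The
first term is at most `n λ √|I| ‖u‖` and the second at most `n θ ‖u‖ ‖β_{S_D}‖`, while the
restricted eigenvalue bound gives `‖Xu‖² ≥ n Λ_min ‖u‖²`; dividing by `n ‖u‖` bounds `‖u‖`.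
-/

open Matrix

theorem sq_le_sq_div_sq_of_mul_sq_le {Λ a C : ℝ} (hΛ : 0 < Λ) (ha : 0 ≤ a)
    (h : Λ * a ^ 2 ≤ a * C) : a ^ 2 ≤ C ^ 2 / Λ ^ 2 := by
  rcases ha.eq_or_lt with rfl | ha
  · rw [zero_pow two_ne_zero]
    positivity
  have hΛa : Λ * a ≤ C := le_of_mul_le_mul_right (by linarith) ha
  rw [le_div_iff₀ (by positivity), ← mul_pow, mul_comm a]
  exact pow_le_pow_left₀ (by positivity) hΛa 2

theorem indicator_add_indicator_eq_self {κ M : Type*} [AddMonoid M] {β : κ → M}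
    {I SD : Finset κ} (hSD : ∀ j, j ∈ SD ↔ (β j ≠ 0 ∧ j ∉ I)) :
    (I : Set κ).indicator β + (SD : Set κ).indicator β = β := by
  funext j
  by_cases hI : j ∈ I
  · have hS : j ∉ SD := fun h => ((hSD j).1 h).2 hI
    simp [hI, hS]
  by_cases hS : j ∈ SD
  · simp [hI, hS]
  · have hβ : β j = 0 := not_not.1 fun h => hS ((hSD j).2 ⟨h, hI⟩)
    simp [hI, hS, hβ]

section Vectors

variable {κ : Type*} [Fintype κ]

theorem sum_sub_sq_eq_of_mul_eq_zero {u v : κ → ℝ} (h : ∀ j, u j * v j = 0) :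
    ∑ j, (u j - v j) ^ 2 = ∑ j, u j ^ 2 + ∑ j, v j ^ 2 := by
  rw [← Finset.sum_add_distrib]
  exact Finset.sum_congr rfl fun j _ => by linear_combination (-2) * h j

theorem sum_indicator_sq (S : Finset κ) (f : κ → ℝ) :
    ∑ j, ((S : Set κ).indicator f j) ^ 2 = ∑ j ∈ S, f j ^ 2 := by
  classical
  simp [Set.indicator_apply, ite_pow, Finset.sum_ite_mem]

theorem dotProduct_eq_zero_of_support_subset_s5 {u w : κ → ℝ} {I : Finset κ}
    (hu : ∀ j ∉ I, u j = 0) (hw : ∀ j ∈ I, w j = 0) : u ⬝ᵥ w = 0 :=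
  Finset.sum_eq_zero fun j _ => by by_cases hj : j ∈ I <;> simp [hj, hu, hw]

theorem abs_dotProduct_le_of_support_subset {u g : κ → ℝ} {I : Finset κ} {M : ℝ} (hM : 0 ≤ M)
    (hu : ∀ j ∉ I, u j = 0) (hg : ∀ j ∈ I, |g j| ≤ M) :
    |u ⬝ᵥ g| ≤ M * √(I.card : ℝ) * √(∑ j, u j ^ 2) := by
  have hsupp : ∀ (F : κ → ℝ), (∀ j ∉ I, F j = 0) → ∑ j ∈ I, F j = ∑ j, F j := fun F hF =>
    Finset.sum_subset (Finset.subset_univ I) fun j _ hj => hF j hj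
  calc |u ⬝ᵥ g| = |∑ j ∈ I, u j * g j| := by
        rw [dotProduct, hsupp _ fun j hj => by simp [hu j hj]]
    _ ≤ ∑ j ∈ I, |u j| * M := by
        refine (Finset.abs_sum_le_sum_abs _ _).trans (Finset.sum_le_sum fun j hj => ?_)
        rw [abs_mul]
        exact mul_le_mul_of_nonneg_left (hg j hj) (abs_nonneg _)
    _ = M * ∑ j ∈ I, 1 * |u j| := by
        rw [Finset.mul_sum]; exact Finset.sum_congr rfl fun j _ => by ring
    _ ≤ M * (√(∑ j ∈ I, (1 : ℝ) ^ 2) * √(∑ j ∈ I, |u j| ^ 2)) :=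
        mul_le_mul_of_nonneg_left (Real.sum_mul_le_sqrt_mul_sqrt _ _ _) hM
    _ = M * √(I.card : ℝ) * √(∑ j, u j ^ 2) := by
        simp only [one_pow, Finset.sum_const, nsmul_eq_mul, mul_one, sq_abs, mul_assoc]
        rw [hsupp _ fun j hj => by simp [hu j hj]]

end Vectors

theorem dotProduct_mulVec_self_eq_of_normal_eq {m κ : Type*} [Fintype m] [Fintype κ]
    (X : Matrix m κ ℝ) {Y ε : m → ℝ} {β βhat u v : κ → ℝ} {I : Finset κ}
    (hε : ε = Y - X *ᵥ β) (hdecomp : βhat - β = u - v) (hu : ∀ j ∉ I, u j = 0)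
    (hnormal : ∀ j ∈ I, (Xᵀ *ᵥ (Y - X *ᵥ βhat)) j = 0) :
    X *ᵥ u ⬝ᵥ X *ᵥ u = u ⬝ᵥ Xᵀ *ᵥ ε + X *ᵥ u ⬝ᵥ X *ᵥ v := by
  have hadjoint : ∀ w, u ⬝ᵥ Xᵀ *ᵥ w = X *ᵥ u ⬝ᵥ w := fun w => by
    rw [dotProduct_mulVec, vecMul_transpose]
  have hresidual : Y - X *ᵥ βhat = ε - X *ᵥ u + X *ᵥ v := by
    have hβhat : βhat = β + (u - v) := by rw [← hdecomp]; abel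
    rw [hε, hβhat, mulVec_add, mulVec_sub]
    abel
  have horth : u ⬝ᵥ Xᵀ *ᵥ (Y - X *ᵥ βhat) = 0 :=
    dotProduct_eq_zero_of_support_subset_s5 hu hnormal
  rw [hadjoint, hresidual, dotProduct_add, dotProduct_sub, ← hadjoint ε] at horth
  linarith

theorem sum_sq_le_of_normal_eq {m κ : Type*} [Fintype m] [Fintype κ]
    (X : Matrix m κ ℝ) {Y ε : m → ℝ} {β βhat u v : κ → ℝ} {I : Finset κ} {c Λ θ lam B : ℝ}
    (hc : 0 < c) (hΛ : 0 < Λ) (hlam : 0 ≤ lam)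
    (hε : ε = Y - X *ᵥ β) (hdecomp : βhat - β = u - v) (hu : ∀ j ∉ I, u j = 0)
    (hnormal : ∀ j ∈ I, (Xᵀ *ᵥ (Y - X *ᵥ βhat)) j = 0)
    (hRE : Λ * c * ∑ j, u j ^ 2 ≤ ∑ i, (X *ᵥ u) i ^ 2)
    (hnoise : ∀ j ∈ I, |(Xᵀ *ᵥ ε) j| ≤ lam * c)
    (hcross : |X *ᵥ u ⬝ᵥ X *ᵥ v| ≤ θ * c * √(∑ j, u j ^ 2) * B) :
    ∑ j, u j ^ 2 ≤ (θ * B + lam * √(I.card : ℝ)) ^ 2 / Λ ^ 2 := by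
  have hgram : ∑ i, (X *ᵥ u) i ^ 2 = u ⬝ᵥ Xᵀ *ᵥ ε + X *ᵥ u ⬝ᵥ X *ᵥ v := by
    rw [← dotProduct_mulVec_self_eq_of_normal_eq X hε hdecomp hu hnormal]
    simp only [dotProduct, sq]
  have hnoise' := abs_dotProduct_le_of_support_subset (mul_nonneg hlam hc.le) hu hnoise
  rw [← Real.sq_sqrt (Finset.sum_nonneg fun j _ => sq_nonneg (u j))]
  refine sq_le_sq_div_sq_of_mul_sq_le hΛ (Real.sqrt_nonneg _) (le_of_mul_le_mul_left ?_ hc)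
  rw [Real.sq_sqrt (by positivity)]
  calc c * (Λ * ∑ j, u j ^ 2) = Λ * c * ∑ j, u j ^ 2 := by ring
    _ ≤ u ⬝ᵥ Xᵀ *ᵥ ε + X *ᵥ u ⬝ᵥ X *ᵥ v := hgram ▸ hRE
    _ ≤ |u ⬝ᵥ Xᵀ *ᵥ ε| + |X *ᵥ u ⬝ᵥ X *ᵥ v| := add_le_add (le_abs_self _) (le_abs_self _)
    _ ≤ lam * c * √(I.card : ℝ) * √(∑ j, u j ^ 2) + θ * c * √(∑ j, u j ^ 2) * B :=
        add_le_add hnoise' hcross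
    _ = c * (√(∑ j, u j ^ 2) * (θ * B + lam * √(I.card : ℝ))) := by ring

theorem stmt5_general (n p : ℕ) (X : Matrix (Fin n) (Fin p) ℝ) (Y : Fin n → ℝ)
    (β : Fin p → ℝ) (ε : Fin n → ℝ) (hε : ∀ i, ε i = Y i - X.mulVec β i)
    (I SD : Finset (Fin p)) (hSD : ∀ j, j ∈ SD ↔ (β j ≠ 0 ∧ j ∉ I))
    (θ Λmin lam : ℝ) (hΛmin : 0 < Λmin) (hlam : 0 < lam) (hn : 0 < n)
    (hRE : ∀ v : Fin p → ℝ, (∀ j ∉ I, v j = 0) →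
      Λmin * n * (∑ j, (v j) ^ 2) ≤ ∑ i, (X.mulVec v i) ^ 2)
    (hθ : ∀ u v : Fin p → ℝ, (∀ j ∉ I, u j = 0) → (∀ j ∉ SD, v j = 0) →
      |∑ i, (X.mulVec u i) * (X.mulVec v i)| ≤
        θ * n * Real.sqrt (∑ j, (u j) ^ 2) * Real.sqrt (∑ j, (v j) ^ 2))
    (hnoise : ∀ j, |∑ i, X i j * ε i| / n ≤ lam)
    (βhat : Fin p → ℝ) (hβhatsupp : ∀ j ∉ I, βhat j = 0)
    (hnormal : ∀ j ∈ I, ∑ i, X i j * (Y i - X.mulVec βhat i) = 0) :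
    ∑ j, (βhat j - β j) ^ 2 ≤
      (θ * Real.sqrt (∑ j ∈ SD, (β j) ^ 2) + lam * Real.sqrt (I.card : ℝ)) ^ 2
        / Λmin ^ 2 + ∑ j ∈ SD, (β j) ^ 2 := by
  set u := βhat - (I : Set (Fin p)).indicator β
  set v := (SD : Set (Fin p)).indicator β
  have hu : ∀ j ∉ I, u j = 0 := fun j hj => by simp [u, hβhatsupp j hj, hj]
  have hv : ∀ j ∉ SD, v j = 0 := fun j hj => by simp [v, hj]
  have hdecomp : βhat - β = u - v := by
    conv_lhs => rw [← indicator_add_indicator_eq_self hSD]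
    exact sub_add_eq_sub_sub _ _ _
  have hdisjoint : ∀ j, u j * v j = 0 := fun j => by
    by_cases hj : j ∈ I
    · simp [hv j fun h => ((hSD j).1 h).2 hj]
    · simp [hu j hj]
  have hn' : (0 : ℝ) < n := by exact_mod_cast hn
  calc ∑ j, (βhat j - β j) ^ 2 = ∑ j, u j ^ 2 + ∑ j ∈ SD, β j ^ 2 := by
        rw [← sum_indicator_sq SD β, ← sum_sub_sq_eq_of_mul_eq_zero hdisjoint]
        exact Finset.sum_congr rfl fun j _ => by rw [← Pi.sub_apply, hdecomp, Pi.sub_apply]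
    _ ≤ _ := by
        gcongr
        refine sum_sq_le_of_normal_eq X hn' hΛmin hlam.le (funext hε) hdecomp hu hnormal
          (hRE u hu) (fun j _ => (div_le_iff₀ hn').1 (hnoise j)) ?_
        rw [← sum_indicator_sq SD β]
        exact hθ u v hu hv

/-- ℓ2 loss of the OLS estimator with missing relevant variables. -/
theorem stmt5 (n p s : ℕ) (X : Matrix (Fin n) (Fin p) ℝ) (Y : Fin n → ℝ)
    (β : Fin p → ℝ) (ε : Fin n → ℝ) (hε : ∀ i, ε i = Y i - X.mulVec β i)
    (I SD : Finset (Fin p)) (hSD : ∀ j, j ∈ SD ↔ (β j ≠ 0 ∧ j ∉ I))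
    (hcard : (I ∪ SD).card ≤ 2 * s)
    (θ Λmin lam : ℝ) (hΛmin : 0 < Λmin) (hlam : 0 < lam) (hθ0 : 0 ≤ θ) (hn : 0 < n)
    (hRE : ∀ v : Fin p → ℝ, (∀ j ∉ I, v j = 0) →
      Λmin * n * (∑ j, (v j) ^ 2) ≤ ∑ i, (X.mulVec v i) ^ 2)
    (hθ : ∀ u v : Fin p → ℝ, (∀ j ∉ I, u j = 0) → (∀ j ∉ SD, v j = 0) →
      |∑ i, (X.mulVec u i) * (X.mulVec v i)| ≤
        θ * n * Real.sqrt (∑ j, (u j) ^ 2) * Real.sqrt (∑ j, (v j) ^ 2))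
    (hnoise : ∀ j, |∑ i, X i j * ε i| / n ≤ lam)
    (βhat : Fin p → ℝ) (hβhatsupp : ∀ j ∉ I, βhat j = 0)
    (hnormal : ∀ j ∈ I, ∑ i, X i j * (Y i - X.mulVec βhat i) = 0) :
    ∑ j, (βhat j - β j) ^ 2 ≤
      (θ * Real.sqrt (∑ j ∈ SD, (β j) ^ 2) + lam * Real.sqrt (I.card : ℝ)) ^ 2
        / Λmin ^ 2 + ∑ j ∈ SD, (β j) ^ 2 :=
  stmt5_general n p X Y β ε hε I SD hSD θ Λmin lam hΛmin hlam hn hRE hθ hnoise βhat hβhatsupp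
    hnormal
end

section
/- Bound on dropped signal energy: let I = {j : |β_init,j| ≥ t_0}, D = {1,...,p}\I, and h = β_init − β^{(1)} where β^{(1)} is β restricted to T_0. If ∑_{j>s_0} β_j² ≤ s_0λ²σ² − a_0λ²σ² (as ensured by the definition of s_0 and A_0) and ‖h_{T_0}‖₂ ≤ C'_0 λ_{p,τ}σ√s_0, and t_0 ≤ C_4 λ_{p,τ}σ, then ‖β_D‖₂² ≤ ((C_4 + C'_0)² + 1)·λ_{p,τ}²σ²·s_0. -/
/-!
A dropped coordinate `j < s₀` has `|β_j| ≤ |β_init,j| + |h_j| < t₀ + |h_j|`, so by Minkowski's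
inequality the energy dropped inside `T₀` is at most `(t₀ √s₀ + ‖h_{T₀}‖₂)² ≤ (C₄ + C₀')² λ_{p,τ}² σ² s₀`.
The coordinates beyond `s₀` carry at most `s₀ λ² σ² ≤ s₀ λ_{p,τ}² σ²` by the tail hypothesis.
-/

open Finset

theorem Finset.sum_add_sq_le_sq_add {ι : Type*} (s : Finset ι) {f g : ι → ℝ} {a b : ℝ}
    (ha : 0 ≤ a) (hb : 0 ≤ b) (hf : ∑ i ∈ s, f i ^ 2 ≤ a ^ 2) (hg : ∑ i ∈ s, g i ^ 2 ≤ b ^ 2) :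
    ∑ i ∈ s, (f i + g i) ^ 2 ≤ (a + b) ^ 2 := by
  have hfg : ∑ i ∈ s, f i * g i ≤ a * b :=
    (Real.sum_mul_le_sqrt_mul_sqrt s f g).trans <| mul_le_mul
      (Real.sqrt_le_iff.2 ⟨ha, hf⟩) (Real.sqrt_le_iff.2 ⟨hb, hg⟩) (Real.sqrt_nonneg _) ha
  have hexpand : ∑ i ∈ s, (f i + g i) ^ 2
      = ∑ i ∈ s, f i ^ 2 + 2 * ∑ i ∈ s, f i * g i + ∑ i ∈ s, g i ^ 2 := by
    simp only [add_sq, sum_add_distrib, mul_sum, mul_assoc]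
  rw [hexpand]
  nlinarith

theorem Finset.sum_sq_le_of_abs_le_add {ι : Type*} {s : Finset ι} {n : ℕ} (hs : #s ≤ n)
    {u v : ι → ℝ} {t b : ℝ} (ht : 0 ≤ t) (hb : 0 ≤ b) (hu : ∀ i ∈ s, |u i| ≤ t + |v i|)
    (hv : ∑ i ∈ s, v i ^ 2 ≤ b ^ 2) :
    ∑ i ∈ s, u i ^ 2 ≤ (t * √n + b) ^ 2 := by
  have hconst : ∑ _i ∈ s, t ^ 2 ≤ (t * √n) ^ 2 := by
    rw [sum_const, nsmul_eq_mul, mul_pow, Real.sq_sqrt n.cast_nonneg, mul_comm]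
    gcongr
  calc ∑ i ∈ s, u i ^ 2 ≤ ∑ i ∈ s, (t + |v i|) ^ 2 :=
        sum_le_sum fun i hi => sq_le_sq.2 ((hu i hi).trans (le_abs_self _))
    _ ≤ (t * √n + b) ^ 2 :=
        sum_add_sq_le_sq_add s (by positivity) hb hconst (by simpa only [sq_abs] using hv)

theorem stmt8_general (p s0 a0 : ℕ) (β βinit h : Fin p → ℝ)
    (lam lampτ σ C0' C4 t0 : ℝ)
    (hlam : 0 < lam) (hlampτ : lam ≤ lampτ)
    (ht0pos : 0 < t0)
    (htail : ∑ j ∈ Finset.univ.filter (fun j : Fin p => s0 ≤ (j : ℕ)), (β j) ^ 2 ≤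
      (s0 : ℝ) * lam ^ 2 * σ ^ 2 - (a0 : ℝ) * lam ^ 2 * σ ^ 2)
    (hh : ∀ j : Fin p, h j = βinit j - (if (j : ℕ) < s0 then β j else 0))
    (hhT0 : Real.sqrt (∑ j ∈ Finset.univ.filter (fun j : Fin p => (j : ℕ) < s0),
        (h j) ^ 2) ≤ C0' * lampτ * σ * Real.sqrt (s0 : ℝ))
    (ht0 : t0 ≤ C4 * lampτ * σ)
    (I : Finset (Fin p)) (hI : ∀ j, j ∈ I ↔ t0 ≤ |βinit j|) :
    ∑ j ∈ Iᶜ, (β j) ^ 2 ≤ ((C4 + C0') ^ 2 + 1) * lampτ ^ 2 * σ ^ 2 * (s0 : ℝ) := by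
  obtain ⟨hK, hhT0sq⟩ := Real.sqrt_le_iff.1 hhT0
  have hhead : ∑ j ∈ Iᶜ.filter (fun j : Fin p => (j : ℕ) < s0), β j ^ 2
      ≤ (C4 * lampτ * σ * √s0 + C0' * lampτ * σ * √s0) ^ 2 := by
    refine sum_sq_le_of_abs_le_add ?_ (ht0pos.le.trans ht0) hK (v := h) ?_ ?_
    · exact (card_le_card (filter_subset_filter _ (subset_univ _))).trans
        (Fin.card_filter_val_lt.trans_le (min_le_right _ _))
    · intro j hj
      obtain ⟨hjI, hjs⟩ := mem_filter.1 hj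
      have hβ : β j = βinit j - h j := by rw [hh j, if_pos hjs]; ring
      have hinit : |βinit j| < t0 := not_le.1 fun hle => mem_compl.1 hjI ((hI j).2 hle)
      rw [hβ]
      linarith [abs_sub (βinit j) (h j)]
    · exact (sum_le_sum_of_subset_of_nonneg (filter_subset_filter _ (subset_univ _))
        fun j _ _ => sq_nonneg (h j)).trans hhT0sq
  have hbeyond : ∑ j ∈ Iᶜ.filter (fun j : Fin p => ¬(j : ℕ) < s0), β j ^ 2
      ≤ s0 * lampτ ^ 2 * σ ^ 2 := calc
    _ ≤ ∑ j ∈ Finset.univ.filter (fun j : Fin p => s0 ≤ (j : ℕ)), β j ^ 2 :=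
      sum_le_sum_of_subset_of_nonneg (fun j hj => by simpa using (mem_filter.1 hj).2)
        fun j _ _ => sq_nonneg (β j)
    _ ≤ s0 * lam ^ 2 * σ ^ 2 := htail.trans (sub_le_self _ (by positivity))
    _ ≤ s0 * lampτ ^ 2 * σ ^ 2 := by gcongr
  have hsq : (C4 * lampτ * σ * √s0 + C0' * lampτ * σ * √s0) ^ 2
      = (C4 + C0') ^ 2 * lampτ ^ 2 * σ ^ 2 * s0 := by
    rw [← add_mul, mul_pow, Real.sq_sqrt s0.cast_nonneg]
    ring
  rw [← sum_filter_add_sum_filter_not Iᶜ (fun j : Fin p => (j : ℕ) < s0)]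
  linarith

/-- Bound on the dropped signal energy after thresholding. -/
theorem stmt8 (p s0 a0 : ℕ) (β βinit h : Fin p → ℝ)
    (lam lampτ σ C0' C4 t0 : ℝ)
    (hlam : 0 < lam) (hσ : 0 < σ) (hlampτ : lam ≤ lampτ)
    (hC0' : 0 < C0') (hC4 : 0 < C4) (ht0pos : 0 < t0)
    (hord : ∀ i j : Fin p, i ≤ j → |β j| ≤ |β i|)
    (hsum : ∑ i, min ((β i) ^ 2) (lam ^ 2 * σ ^ 2) ≤ (s0 : ℝ) * lam ^ 2 * σ ^ 2)
    (hA0 : ∀ j : Fin p, lam * σ < |β j| ↔ (j : ℕ) < a0) (ha0 : a0 ≤ s0)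
    (htail : ∑ j ∈ Finset.univ.filter (fun j : Fin p => s0 ≤ (j : ℕ)), (β j) ^ 2 ≤
      (s0 : ℝ) * lam ^ 2 * σ ^ 2 - (a0 : ℝ) * lam ^ 2 * σ ^ 2)
    (hh : ∀ j : Fin p, h j = βinit j - (if (j : ℕ) < s0 then β j else 0))
    (hhT0 : Real.sqrt (∑ j ∈ Finset.univ.filter (fun j : Fin p => (j : ℕ) < s0),
        (h j) ^ 2) ≤ C0' * lampτ * σ * Real.sqrt (s0 : ℝ))
    (ht0 : t0 ≤ C4 * lampτ * σ)
    (I : Finset (Fin p)) (hI : ∀ j, j ∈ I ↔ t0 ≤ |βinit j|) :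
    ∑ j ∈ Iᶜ, (β j) ^ 2 ≤ ((C4 + C0') ^ 2 + 1) * lampτ ^ 2 * σ ^ 2 * (s0 : ℝ) :=
  stmt8_general p s0 a0 β βinit h lam lampτ σ C0' C4 t0 hlam hlampτ ht0pos htail hh hhT0 ht0 I hI
end

section
/- General dropped-energy bound: for any threshold t_0 and I = {j : |β_init,j| ≥ t_0}, D = I^c, D_{11} = D ∩ A_0, h = β_init − β_{T_0}, it holds ‖β_D‖₂² ≤ (s_0 − a_0)λ²σ² + (t_0√a_0 + ‖h_{D_{11}}‖₂)². Moreover if t_0 < β_min,A_0 := min_{j∈A_0}|β_j|, then ‖β_D‖₂² ≤ (s_0 − a_0)λ²σ² + ‖h_{D_{11}}‖₂²·(β_min,A_0/(β_min,A_0 − t_0))². -/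
/-!
On `D₁₁ = Iᶜ ∩ A₀` the initial estimate is below `t₀` in absolute value, so
`|β_j| ≤ t₀ + |h_j|`; Minkowski's inequality turns this into the first bound, and
`β_min ≤ |β_j|` sharpens it to `|β_j| ≤ |h_j| β_min / (β_min - t₀)`. The rest of `Iᶜ` lies
outside `A₀`, where `β_j² = min(β_j², λ²σ²)`; as each of the `a₀` coordinates in `A₀` contributes
exactly `λ²σ²` to the sum defining `s₀`, the coordinates outside `A₀` contribute at most
`(s₀ - a₀)λ²σ²`.
-/

open Finset

section DominatedSquares

variable {ι : Type*} {s : Finset ι} {f g : ι → ℝ} {t : ℝ}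

lemma sum_sq_le_of_abs_le_add (ht : 0 ≤ t) (hfg : ∀ i ∈ s, |f i| ≤ t + |g i|) :
    ∑ i ∈ s, f i ^ 2 ≤ (t * √(#s : ℝ) + √(∑ i ∈ s, g i ^ 2)) ^ 2 := by
  have hcs : ∑ i ∈ s, |g i| ≤ √(#s : ℝ) * √(∑ i ∈ s, g i ^ 2) := by
    simpa using Real.sum_mul_le_sqrt_mul_sqrt s (fun _ ↦ 1) (fun i ↦ |g i|)
  have hexpand : ∑ i ∈ s, (t + |g i|) ^ 2 =
      #s * t ^ 2 + 2 * t * ∑ i ∈ s, |g i| + ∑ i ∈ s, g i ^ 2 := by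
    simp only [add_sq, sq_abs, sum_add_distrib, sum_const, nsmul_eq_mul, mul_sum]
  calc ∑ i ∈ s, f i ^ 2 ≤ ∑ i ∈ s, (t + |g i|) ^ 2 := sum_le_sum fun i hi ↦ by
        rw [← sq_abs (f i)]; exact pow_le_pow_left₀ (abs_nonneg _) (hfg i hi) 2
    _ ≤ (t * √(#s : ℝ) + √(∑ i ∈ s, g i ^ 2)) ^ 2 := by
        rw [hexpand, add_sq, mul_pow, Real.sq_sqrt (by positivity),
          Real.sq_sqrt (sum_nonneg fun _ _ ↦ sq_nonneg _)]
        nlinarith [mul_le_mul_of_nonneg_left hcs ht]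

lemma sum_sq_le_mul_of_abs_le_add {b : ℝ} (ht : 0 ≤ t) (htb : t < b)
    (hbf : ∀ i ∈ s, b ≤ |f i|) (hfg : ∀ i ∈ s, |f i| ≤ t + |g i|) :
    ∑ i ∈ s, f i ^ 2 ≤ (∑ i ∈ s, g i ^ 2) * (b / (b - t)) ^ 2 := by
  rw [sum_mul]
  refine sum_le_sum fun i hi ↦ ?_
  have hfi : |f i| ≤ |g i| * (b / (b - t)) := by
    rw [mul_div_assoc', le_div_iff₀ (sub_pos.2 htb)]
    nlinarith [hbf i hi, hfg i hi]
  rw [← sq_abs (f i), ← sq_abs (g i), ← mul_pow]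
  exact pow_le_pow_left₀ (abs_nonneg _) hfi 2

end DominatedSquares

lemma sum_compl_le_of_sum_min_le {ι : Type*} [Fintype ι] [DecidableEq ι] (f : ι → ℝ) {c s : ℝ}
    (A : Finset ι) (hA : ∀ i ∈ A, c ≤ f i) (hAc : ∀ i ∉ A, f i ≤ c)
    (hsum : ∑ i, min (f i) c ≤ s * c) : ∑ i ∈ Aᶜ, f i ≤ (s - #A) * c := by
  have hmin : ∑ i, min (f i) c = #A * c + ∑ i ∈ Aᶜ, f i := by
    rw [← sum_add_sum_compl A, sum_congr rfl fun i hi ↦ min_eq_right (hA i hi),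
      sum_congr rfl fun i hi ↦ min_eq_left (hAc i (mem_compl.1 hi)), sum_const, nsmul_eq_mul]
  linarith

lemma sum_sq_filter_le_of_sum_min_sq_le {p a0 s0 : ℕ} (β : Fin p → ℝ) {c : ℝ} (hc : 0 ≤ c)
    (hsum : ∑ i, min (β i ^ 2) (c ^ 2) ≤ s0 * c ^ 2)
    (hA0 : ∀ j : Fin p, c < |β j| ↔ j.val < a0) (ha0 : a0 ≤ s0) :
    ∑ j : Fin p with a0 ≤ j.val, β j ^ 2 ≤ ((s0 : ℝ) - a0) * c ^ 2 := by
  rcases le_or_gt a0 p with hp | hp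
  · set A : Finset (Fin p) := {j | j.val < a0}
    have hA : #A = a0 := by rw [Fin.card_filter_val_lt, min_eq_right hp]
    have hcompl : ({j | a0 ≤ j.val} : Finset (Fin p)) = Aᶜ := by ext j; simp [A]
    rw [hcompl, ← hA]
    refine sum_compl_le_of_sum_min_le (fun j ↦ β j ^ 2) A (fun j hj ↦ ?_) (fun j hj ↦ ?_) hsum
    · rw [← sq_abs (β j)]
      exact pow_le_pow_left₀ hc ((hA0 j).2 (mem_filter.1 hj).2).le 2
    · rw [← sq_abs (β j)]
      exact pow_le_pow_left₀ (abs_nonneg _) (not_lt.1 fun h ↦ hj (by simpa [A] using (hA0 j).1 h)) 2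
  · rw [filter_eq_empty_iff.2 fun j _ ↦ not_le.2 (j.isLt.trans hp), sum_empty]
    exact mul_nonneg (sub_nonneg.2 (by exact_mod_cast ha0)) (sq_nonneg c)

theorem stmt9_general (p s0 a0 : ℕ) (β βinit h : Fin p → ℝ)
    (lam σ t0 : ℝ) (hlam : 0 < lam) (hσ : 0 < σ) (ht0pos : 0 < t0)
    (hsum : ∑ i, min ((β i) ^ 2) (lam ^ 2 * σ ^ 2) ≤ (s0 : ℝ) * lam ^ 2 * σ ^ 2)
    (hA0 : ∀ j : Fin p, lam * σ < |β j| ↔ (j : ℕ) < a0) (ha0 : a0 ≤ s0)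
    (hh : ∀ j : Fin p, h j = βinit j - (if (j : ℕ) < s0 then β j else 0))
    (I : Finset (Fin p)) (hI : ∀ j, j ∈ I ↔ t0 ≤ |βinit j|)
    (D11 : Finset (Fin p)) (hD11 : ∀ j, j ∈ D11 ↔ (j ∉ I ∧ (j : ℕ) < a0)) :
    (∑ j ∈ Iᶜ, (β j) ^ 2 ≤ ((s0 : ℝ) - (a0 : ℝ)) * lam ^ 2 * σ ^ 2 +
      (t0 * Real.sqrt (a0 : ℝ) + Real.sqrt (∑ j ∈ D11, (h j) ^ 2)) ^ 2) ∧
    (∀ bmin : ℝ, (∀ j : Fin p, (j : ℕ) < a0 → bmin ≤ |β j|) → t0 < bmin →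
      ∑ j ∈ Iᶜ, (β j) ^ 2 ≤ ((s0 : ℝ) - (a0 : ℝ)) * lam ^ 2 * σ ^ 2 +
        (∑ j ∈ D11, (h j) ^ 2) * (bmin / (bmin - t0)) ^ 2) := by
  have hsplit : ∑ j ∈ Iᶜ, β j ^ 2 = ∑ j ∈ Iᶜ \ D11, β j ^ 2 + ∑ j ∈ D11, β j ^ 2 :=
    (sum_sdiff fun j hj ↦ mem_compl.2 ((hD11 j).1 hj).1).symm
  have htail : ∑ j ∈ Iᶜ \ D11, β j ^ 2 ≤ ((s0 : ℝ) - a0) * lam ^ 2 * σ ^ 2 := by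
    have hsub : Iᶜ \ D11 ⊆ ({j | a0 ≤ j.val} : Finset (Fin p)) := fun j hj ↦ by
      simp only [mem_sdiff, mem_compl, hD11, not_and, not_lt] at hj
      simpa using hj.2 hj.1
    refine (sum_le_sum_of_subset_of_nonneg hsub fun _ _ _ ↦ sq_nonneg _).trans ?_
    rw [mul_assoc, ← mul_pow]
    exact sum_sq_filter_le_of_sum_min_sq_le β (by positivity) (by rwa [mul_pow, ← mul_assoc])
      hA0 ha0
  have hβ : ∀ j ∈ D11, |β j| ≤ t0 + |h j| := fun j hj ↦ by
    obtain ⟨hjI, hja⟩ := (hD11 j).1 hj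
    have hinit : |βinit j| < t0 := not_le.1 fun hle ↦ hjI ((hI j).2 hle)
    have hβj : β j = βinit j - h j := by rw [hh j, if_pos (hja.trans_le ha0)]; ring
    linarith [hβj ▸ abs_sub (βinit j) (h j)]
  have hcard : (#D11 : ℝ) ≤ a0 := by
    have hsub : D11 ⊆ ({j | j.val < a0} : Finset (Fin p)) := fun j hj ↦ by
      simpa using ((hD11 j).1 hj).2
    exact_mod_cast (card_le_card hsub).trans (Fin.card_filter_val_lt.trans_le (min_le_right _ _))
  refine ⟨?_, fun bmin hbmin htb ↦ ?_⟩
  · have hhead : ∑ j ∈ D11, β j ^ 2 ≤ (t0 * √(a0 : ℝ) + √(∑ j ∈ D11, h j ^ 2)) ^ 2 :=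
      (sum_sq_le_of_abs_le_add ht0pos.le hβ).trans (by gcongr)
    linarith
  · have hhead := sum_sq_le_mul_of_abs_le_add ht0pos.le htb
      (fun j hj ↦ hbmin j ((hD11 j).1 hj).2) hβ
    linarith

/-- General dropped-energy bound for an arbitrary threshold. -/
theorem stmt9 (p s0 a0 : ℕ) (β βinit h : Fin p → ℝ)
    (lam σ t0 : ℝ) (hlam : 0 < lam) (hσ : 0 < σ) (ht0pos : 0 < t0)
    (hord : ∀ i j : Fin p, i ≤ j → |β j| ≤ |β i|)
    (hsum : ∑ i, min ((β i) ^ 2) (lam ^ 2 * σ ^ 2) ≤ (s0 : ℝ) * lam ^ 2 * σ ^ 2)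
    (hA0 : ∀ j : Fin p, lam * σ < |β j| ↔ (j : ℕ) < a0) (ha0 : a0 ≤ s0)
    (hh : ∀ j : Fin p, h j = βinit j - (if (j : ℕ) < s0 then β j else 0))
    (I : Finset (Fin p)) (hI : ∀ j, j ∈ I ↔ t0 ≤ |βinit j|)
    (D11 : Finset (Fin p)) (hD11 : ∀ j, j ∈ D11 ↔ (j ∉ I ∧ (j : ℕ) < a0)) :
    (∑ j ∈ Iᶜ, (β j) ^ 2 ≤ ((s0 : ℝ) - (a0 : ℝ)) * lam ^ 2 * σ ^ 2 +
      (t0 * Real.sqrt (a0 : ℝ) + Real.sqrt (∑ j ∈ D11, (h j) ^ 2)) ^ 2) ∧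
    (∀ bmin : ℝ, (∀ j : Fin p, (j : ℕ) < a0 → bmin ≤ |β j|) → t0 < bmin →
      ∑ j ∈ Iᶜ, (β j) ^ 2 ≤ ((s0 : ℝ) - (a0 : ℝ)) * lam ^ 2 * σ ^ 2 +
        (∑ j ∈ D11, (h j) ^ 2) * (bmin / (bmin - t0)) ^ 2) :=
  stmt9_general p s0 a0 β βinit h lam σ t0 hlam hσ ht0pos hsum hA0 ha0 hh I hI D11 hD11
end

section
/- If β_min,A_0 ≥ ‖h_{A_0}‖_∞ + t_0 where h = β_init − β_{T_0} and I = {j : |β_init,j| ≥ t_0}, then A_0 ⊆ I; and if additionally t_0 ≥ ‖(β_init)_{T_0^c}‖₁/š_0 (or t_0 ≥ ‖(β_init)_{T_0^c}‖₂/√š_0), then |I ∩ T_0^c| ≤ š_0, hence |I| ≤ s_0 + š_0; moreover ‖β_D‖₂² ≤ (s_0 − a_0)λ²σ² where D = I^c. -/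
/-!
A strong coordinate `j ∈ A₀` satisfies `|β_init j| ≥ |β j| - |h j| ≥ t₀`, so it is selected.
Every selected coordinate outside `T₀` carries at least `t₀` of the `ℓ₁`-mass (or `t₀²` of the
squared `ℓ₂`-mass) of `β_init` off `T₀`, which bounds their number by Markov counting.
Finally, an unselected coordinate is weak, so `β j² = min (β j²) (λσ)²` there, while each of the
`a₀` strong coordinates uses up a full `(λσ)²` of the budget `s₀ (λσ)²`.
-/

open Finset

section Counting

variable {ι : Type*} {S T : Finset ι} {t : ℝ} {n : ℕ}

lemma card_le_of_forall_le_of_sum_le {f : ι → ℝ} (ht : 0 < t) (hf : ∀ i ∈ T, 0 ≤ f i)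
    (hST : S ⊆ T) (hS : ∀ i ∈ S, t ≤ f i) (hT : ∑ i ∈ T, f i ≤ n * t) : #S ≤ n := by
  have hcount : #S * t ≤ n * t :=
    calc (#S : ℝ) * t = #S • t := (nsmul_eq_mul _ _).symm
      _ ≤ ∑ i ∈ S, f i := card_nsmul_le_sum _ _ _ hS
      _ ≤ ∑ i ∈ T, f i := sum_le_sum_of_subset_of_nonneg hST fun i hi _ ↦ hf i hi
      _ ≤ n * t := hT
  exact_mod_cast le_of_mul_le_mul_right hcount ht

lemma card_le_of_forall_le_abs {x : ι → ℝ} (ht : 0 < t) (hST : S ⊆ T)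
    (hS : ∀ i ∈ S, t ≤ |x i|)
    (hmass : ∑ i ∈ T, |x i| ≤ n * t ∨ ∑ i ∈ T, x i ^ 2 ≤ n * t ^ 2) : #S ≤ n := by
  rcases hmass with hl1 | hl2
  · exact card_le_of_forall_le_of_sum_le ht (fun _ _ ↦ abs_nonneg _) hST hS hl1
  · refine card_le_of_forall_le_of_sum_le (pow_pos ht 2) (fun _ _ ↦ sq_nonneg _) hST
      (fun i hi ↦ ?_) hl2
    rw [← sq_abs (x i)]
    exact pow_le_pow_left₀ ht.le (hS i hi) 2

end Counting

lemma sum_sq_add_card_mul_le_sum_min {ι : Type*} [Fintype ι] [DecidableEq ι] {β : ι → ℝ}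
    {c : ℝ} (hc : 0 ≤ c) {A D : Finset ι} (hDA : Disjoint D A)
    (hweak : ∀ j ∈ D, β j ^ 2 ≤ c) (hstrong : ∀ j ∈ A, c ≤ β j ^ 2) :
    ∑ j ∈ D, β j ^ 2 + #A * c ≤ ∑ j, min (β j ^ 2) c := by
  have hD : ∑ j ∈ D, β j ^ 2 = ∑ j ∈ D, min (β j ^ 2) c :=
    sum_congr rfl fun j hj ↦ (min_eq_left (hweak j hj)).symm
  have hA : (#A : ℝ) * c = ∑ j ∈ A, min (β j ^ 2) c := by
    rw [sum_congr rfl fun j hj ↦ min_eq_right (hstrong j hj), sum_const, nsmul_eq_mul]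
  rw [hD, hA, ← sum_union hDA]
  exact sum_le_univ_sum_of_nonneg fun j ↦ le_min (sq_nonneg _) hc

lemma sum_sq_compl_le_of_forall_lt_mem {p a s : ℕ} {β : Fin p → ℝ} {c : ℝ} {I : Finset (Fin p)}
    (hstrong : ∀ j : Fin p, c < |β j| ↔ (j : ℕ) < a) (hI : ∀ j : Fin p, (j : ℕ) < a → j ∈ I)
    (has : a ≤ s) (hsum : ∑ j, min (β j ^ 2) (c ^ 2) ≤ s * c ^ 2) :
    ∑ j ∈ Iᶜ, β j ^ 2 ≤ (s - a) * c ^ 2 := by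
  rcases Iᶜ.eq_empty_or_nonempty with hempty | ⟨j0, hj0⟩
  · rw [hempty, sum_empty]
    exact mul_nonneg (sub_nonneg.2 (by exact_mod_cast has)) (sq_nonneg c)
  have hnot_lt : ∀ j ∈ Iᶜ, ¬ (j : ℕ) < a := fun j hj hlt ↦ mem_compl.1 hj (hI j hlt)
  have hweak : ∀ j ∈ Iᶜ, |β j| ≤ c := fun j hj ↦ not_lt.1 (mt (hstrong j).1 (hnot_lt j hj))
  have hc : 0 ≤ c := (abs_nonneg _).trans (hweak j0 hj0)
  have hA_card : #{j : Fin p | (j : ℕ) < a} = a := by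
    rw [Fin.card_filter_val_lt]
    exact min_eq_right ((not_lt.1 (hnot_lt j0 hj0)).trans j0.isLt.le)
  have key := sum_sq_add_card_mul_le_sum_min (β := β) (sq_nonneg c)
    (A := {j : Fin p | (j : ℕ) < a}) (D := Iᶜ)
    (disjoint_left.2 fun j hj hA ↦ hnot_lt j hj (mem_filter.1 hA).2)
    (fun j hj ↦ by rw [← sq_abs]; exact pow_le_pow_left₀ (abs_nonneg _) (hweak j hj) 2)
    (fun j hj ↦ by
      rw [← sq_abs (β j)]; exact pow_le_pow_left₀ hc ((hstrong j).2 (mem_filter.1 hj).2).le 2)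
  rw [hA_card] at key
  linarith

theorem stmt10_general (p s0 a0 sv0 : ℕ) (β βinit h : Fin p → ℝ)
    (lam σ t0 : ℝ) (ht0pos : 0 < t0)
    (hsum : ∑ i, min ((β i) ^ 2) (lam ^ 2 * σ ^ 2) ≤ (s0 : ℝ) * lam ^ 2 * σ ^ 2)
    (hA0 : ∀ j : Fin p, lam * σ < |β j| ↔ (j : ℕ) < a0) (ha0 : a0 ≤ s0)
    (T0 : Finset (Fin p)) (hT0 : ∀ j, j ∈ T0 ↔ (j : ℕ) < s0)
    (hh : ∀ j : Fin p, h j = βinit j - (if (j : ℕ) < s0 then β j else 0))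
    (hmin : ∀ j k : Fin p, (j : ℕ) < a0 → (k : ℕ) < a0 → |h k| + t0 ≤ |β j|)
    (I : Finset (Fin p)) (hI : ∀ j, j ∈ I ↔ t0 ≤ |βinit j|) :
    (∀ j : Fin p, (j : ℕ) < a0 → j ∈ I) ∧
    (((∑ j ∈ T0ᶜ, |βinit j| ≤ (sv0 : ℝ) * t0) ∨
      (∑ j ∈ T0ᶜ, (βinit j) ^ 2 ≤ (sv0 : ℝ) * t0 ^ 2)) →
      ((I \ T0).card ≤ sv0 ∧ I.card ≤ s0 + sv0)) ∧
    ∑ j ∈ Iᶜ, (β j) ^ 2 ≤ ((s0 : ℝ) - (a0 : ℝ)) * lam ^ 2 * σ ^ 2 := by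
  have hA0_sub_I : ∀ j : Fin p, (j : ℕ) < a0 → j ∈ I := fun j hj ↦ by
    have hβ : β j = βinit j - h j := by rw [hh j, if_pos (hj.trans_le ha0)]; ring
    have := hmin j j hj hj
    have := hβ ▸ abs_sub (βinit j) (h j)
    exact (hI j).2 (by linarith)
  have hT0_card : #T0 ≤ s0 := by
    rw [show T0 = ({j : Fin p | (j : ℕ) < s0} : Finset (Fin p)) by ext j; simp [hT0],
      Fin.card_filter_val_lt]
    exact min_le_right _ _
  refine ⟨hA0_sub_I, fun hmass ↦ ?_, ?_⟩
  · have hcard : #(I \ T0) ≤ sv0 := card_le_of_forall_le_abs ht0pos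
      (fun j hj ↦ mem_compl.2 (mem_sdiff.1 hj).2) (fun j hj ↦ (hI j).1 (mem_sdiff.1 hj).1) hmass
    exact ⟨hcard, (card_le_card_sdiff_add_card (t := T0)).trans (by omega)⟩
  · have := sum_sq_compl_le_of_forall_lt_mem hA0 hA0_sub_I ha0 (by rwa [mul_pow, ← mul_assoc])
    rwa [mul_pow, ← mul_assoc] at this

/-- Recovery of the strong-signal set A0 and sparsity of the selected model. -/
theorem stmt10 (p s0 a0 sv0 : ℕ) (β βinit h : Fin p → ℝ)
    (lam σ t0 : ℝ) (hlam : 0 < lam) (hσ : 0 < σ) (ht0pos : 0 < t0)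
    (hsv0 : s0 ≤ sv0)
    (hord : ∀ i j : Fin p, i ≤ j → |β j| ≤ |β i|)
    (hsum : ∑ i, min ((β i) ^ 2) (lam ^ 2 * σ ^ 2) ≤ (s0 : ℝ) * lam ^ 2 * σ ^ 2)
    (hA0 : ∀ j : Fin p, lam * σ < |β j| ↔ (j : ℕ) < a0) (ha0 : a0 ≤ s0)
    (T0 : Finset (Fin p)) (hT0 : ∀ j, j ∈ T0 ↔ (j : ℕ) < s0)
    (hh : ∀ j : Fin p, h j = βinit j - (if (j : ℕ) < s0 then β j else 0))
    (hmin : ∀ j k : Fin p, (j : ℕ) < a0 → (k : ℕ) < a0 → |h k| + t0 ≤ |β j|)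
    (I : Finset (Fin p)) (hI : ∀ j, j ∈ I ↔ t0 ≤ |βinit j|) :
    (∀ j : Fin p, (j : ℕ) < a0 → j ∈ I) ∧
    (((∑ j ∈ T0ᶜ, |βinit j| ≤ (sv0 : ℝ) * t0) ∨
      (∑ j ∈ T0ᶜ, (βinit j) ^ 2 ≤ (sv0 : ℝ) * t0 ^ 2)) →
      ((I \ T0).card ≤ sv0 ∧ I.card ≤ s0 + sv0)) ∧
    ∑ j ∈ Iᶜ, (β j) ^ 2 ≤ ((s0 : ℝ) - (a0 : ℝ)) * lam ^ 2 * σ ^ 2 :=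
  stmt10_general p s0 a0 sv0 β βinit h lam σ t0 ht0pos hsum hA0 ha0 T0 hT0 hh hmin I hI
end

section
/- Cone decomposition bound (Candès–Tao Lemma 3.1 generalization): if Λ_min(2s_0) > 0 and θ_{s_0,2s_0} < ∞, then for any h ∈ ℝ^p, with T_0 the positions of the s_0 largest entries of |h| restricted as given, T_1 the next s_0 largest outside T_0, T_{01} = T_0 ∪ T_1: ‖h_{T_{01}}‖₂ ≤ ‖Xh‖₂/(√(Λ_min(2s_0))·√n) + (θ_{s_0,2s_0}/(√s_0·Λ_min(2s_0)))·‖h_{T_0^c}‖₁, and ‖h_{T_{01}^c}‖₂² ≤ ‖h_{T_0^c}‖₁²/s_0, hence ‖h‖₂² ≤ ‖h_{T_{01}}‖₂² + ‖h_{T_0^c}‖₁²/s_0. -/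
/-!
Write `U = T₀ ∪ T₁`. Every coordinate outside `U` is at most the average `‖h_{T₁}‖₁ / s₀`,
which gives the tail bound directly. For the first bound, cut `Uᶜ` into consecutive blocks of
the `s₀` largest remaining entries: on each block `|h|` is dominated by the average over the
previous one, so restricted orthogonality, summed over the blocks, bounds
`|⟨X h_U, X h_{Uᶜ}⟩|` by `θ n ‖h_U‖₂ ‖h_{T₀ᶜ}‖₁ / √s₀`. Together with
`‖X h_U‖² = ⟨X h_U, X h⟩ - ⟨X h_U, X h_{Uᶜ}⟩`, Cauchy–Schwarz and the restricted eigenvalue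
bound `Λ n ‖h_U‖² ≤ ‖X h_U‖²`, this is a quadratic inequality for `‖h_U‖₂`.
-/

open Finset Matrix

section

variable {ι : Type*}

theorem Finset.exists_subset_card_eq_forall_le [DecidableEq ι] (f : ι → ℝ) (S : Finset ι)
    {s : ℕ} (hs : s ≤ S.card) : ∃ T ⊆ S, T.card = s ∧ ∀ j ∈ T, ∀ k ∈ S \ T, f k ≤ f j := by
  obtain ⟨T, hT, hmax⟩ :=
    (S.powersetCard s).exists_max_image (∑ j ∈ ·, f j) (powersetCard_nonempty.mpr hs)
  obtain ⟨hTS, hTcard⟩ := mem_powersetCard.mp hT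
  refine ⟨T, hTS, hTcard, fun j hj k hk => ?_⟩
  obtain ⟨hkS, hkT⟩ := mem_sdiff.mp hk
  have hk' : k ∉ T.erase j := fun h => hkT (mem_of_mem_erase h)
  -- exchanging `j` for `k` must not increase the sum
  have hswap : insert k (T.erase j) ∈ S.powersetCard s := by
    refine mem_powersetCard.mpr ⟨insert_subset hkS ((erase_subset j T).trans hTS), ?_⟩
    rw [card_insert_of_notMem hk', card_erase_add_one hj, hTcard]
  have := hmax _ hswap
  rw [sum_insert hk', sum_erase_eq_sub hj] at this
  linarith

variable {h : ι → ℝ} {s : ℕ} {M : ℝ}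

theorem sqrt_sum_sq_le_div_sqrt (hs : 0 < s) (hM : 0 ≤ M) {T : Finset ι} (hT : T.card ≤ s)
    (hdom : ∀ k ∈ T, s * |h k| ≤ M) : √(∑ k ∈ T, h k ^ 2) ≤ M / √s := by
  have hs' : (0 : ℝ) < s := by exact_mod_cast hs
  have hbound : ∑ k ∈ T, h k ^ 2 ≤ M ^ 2 / s := calc
    ∑ k ∈ T, h k ^ 2 ≤ ∑ _k ∈ T, (M / s) ^ 2 := by
      refine sum_le_sum fun k hk => ?_
      rw [← sq_abs]
      gcongr
      rw [le_div_iff₀ hs', mul_comm]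
      exact hdom k hk
    _ = T.card * (M / s) ^ 2 := by rw [sum_const, nsmul_eq_mul]
    _ ≤ s * (M / s) ^ 2 := by gcongr
    _ = M ^ 2 / s := by field_simp
  calc √(∑ k ∈ T, h k ^ 2) ≤ √(M ^ 2 / s) := Real.sqrt_le_sqrt hbound
    _ = M / √s := by rw [Real.sqrt_div' _ hs'.le, Real.sqrt_sq hM]

theorem sum_sq_le_sq_add_sum_abs_div (hs : 0 < s) (hM : 0 ≤ M) {B : Finset ι}
    (hdom : ∀ k ∈ B, s * |h k| ≤ M) : ∑ k ∈ B, h k ^ 2 ≤ (M + ∑ k ∈ B, |h k|) ^ 2 / s := by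
  have hs' : (0 : ℝ) < s := by exact_mod_cast hs
  have hB : 0 ≤ ∑ k ∈ B, |h k| := sum_nonneg fun _ _ => abs_nonneg _
  rw [le_div_iff₀ hs', sum_mul]
  calc ∑ k ∈ B, h k ^ 2 * s = ∑ k ∈ B, s * |h k| * |h k| := by
        refine sum_congr rfl fun k _ => ?_
        rw [← sq_abs]; ring
    _ ≤ ∑ k ∈ B, M * |h k| := sum_le_sum fun k hk => by gcongr; exact hdom k hk
    _ = M * ∑ k ∈ B, |h k| := (mul_sum _ _ _).symm
    _ ≤ (M + ∑ k ∈ B, |h k|) ^ 2 := by nlinarith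

theorem abs_sum_le_of_abs_sum_le_sparse [DecidableEq ι] {g : ι → ℝ} {C : ℝ} (hs : 0 < s)
    (hC : 0 ≤ C) (S : Finset ι)
    (hg : ∀ T ⊆ S, T.card ≤ s → |∑ j ∈ T, g j| ≤ C * √(∑ j ∈ T, h j ^ 2))
    (hM : 0 ≤ M) (hdom : ∀ k ∈ S, s * |h k| ≤ M) :
    |∑ j ∈ S, g j| ≤ C * ((M + ∑ j ∈ S, |h j|) / √s) := by
  have hl1 : ∀ T : Finset ι, 0 ≤ ∑ j ∈ T, |h j| := fun T => sum_nonneg fun _ _ => abs_nonneg _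
  induction S using Finset.strongInduction generalizing M with
  | H S ih =>
    have hblock : ∀ T ⊆ S, T.card ≤ s → (∀ k ∈ T, s * |h k| ≤ M) →
        |∑ j ∈ T, g j| ≤ C * (M / √s) := fun T hTS hT hdomT =>
      (hg T hTS hT).trans (by gcongr; exact sqrt_sum_sq_le_div_sqrt hs hM hT hdomT)
    rcases le_or_gt S.card s with hS | hS
    · refine (hblock S subset_rfl hS hdom).trans ?_
      gcongr
      exact le_add_of_nonneg_right (hl1 S)
    obtain ⟨T, hTS, hTcard, htop⟩ := S.exists_subset_card_eq_forall_le (|h ·|) hS.le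
    have hTne : T.Nonempty := card_pos.mp (hTcard ▸ hs)
    have hdomRest : ∀ k ∈ S \ T, s * |h k| ≤ ∑ j ∈ T, |h j| := fun k hk => by
      simpa [hTcard] using card_nsmul_le_sum T (|h ·|) _ fun j hj => htop j hj k hk
    have hrest := ih (S \ T) (sdiff_ssubset hTS hTne)
      (fun U hU => hg U (hU.trans sdiff_subset)) (hl1 T) hdomRest
    have hfirst := hblock T hTS hTcard.le fun k hk => hdom k (hTS hk)
    rw [← sum_sdiff hTS, ← sum_sdiff hTS (f := (|h ·|))]
    calc |∑ j ∈ S \ T, g j + ∑ j ∈ T, g j|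
        ≤ |∑ j ∈ S \ T, g j| + |∑ j ∈ T, g j| := abs_add_le _ _
      _ ≤ C * ((∑ j ∈ T, |h j| + ∑ j ∈ S \ T, |h j|) / √s) + C * (M / √s) :=
          add_le_add hrest hfirst
      _ = C * ((M + (∑ j ∈ S \ T, |h j| + ∑ j ∈ T, |h j|)) / √s) := by ring

theorem le_div_add_div_sq_of_sq_le_mul_add {a b K L D : ℝ} (hL : 0 < L) (hK : 0 ≤ K)
    (hD : 0 ≤ D) (hab : L * a ≤ b) (hb : b ^ 2 ≤ b * K + D * a) : a ≤ K / L + D / L ^ 2 := by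
  suffices L ^ 2 * a ≤ L * K + D by
    rw [div_add_div _ _ hL.ne' (by positivity), le_div_iff₀ (by positivity)]
    nlinarith
  by_contra! hlt
  -- then `K < L a ≤ b`, so `L a (L a - K) ≤ b (b - K) ≤ D a < L a (L a - K)`
  have hLa : K < L * a := by nlinarith
  have : L * a * (L * a - K) ≤ b * (b - K) := by nlinarith
  nlinarith

section

variable {m : Type*} [Fintype ι] [Fintype m]

theorem sum_sq_indicator (h : ι → ℝ) (T : Finset ι) :
    ∑ j, (T : Set ι).indicator h j ^ 2 = ∑ j ∈ T, h j ^ 2 := by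
  rw [← sum_indicator_subset _ (subset_univ T)]
  refine sum_congr rfl fun j _ => ?_
  by_cases hj : j ∈ T <;> simp [hj]

theorem dotProduct_indicator (c h : ι → ℝ) (T : Finset ι) :
    c ⬝ᵥ (T : Set ι).indicator h = ∑ j ∈ T, c j * h j := by
  simp_rw [dotProduct, ← Set.indicator_mul_right]
  exact sum_indicator_subset _ (subset_univ T)

theorem sqrt_sum_sq_le_of_restricted_orthogonality [DecidableEq ι] (X : Matrix m ι ℝ)
    {Λ θ : ℝ} (hΛ : 0 < Λ) (hθ : 0 ≤ θ) (hs : 0 < s) (U : Finset ι)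
    (hRE : Λ * ∑ j ∈ U, h j ^ 2 ≤ ∑ i, (X *ᵥ (U : Set ι).indicator h) i ^ 2)
    (hRO : ∀ T ⊆ Uᶜ, T.card ≤ s →
      |X *ᵥ (T : Set ι).indicator h ⬝ᵥ X *ᵥ (U : Set ι).indicator h| ≤
        θ * √(∑ j ∈ T, h j ^ 2) * √(∑ j ∈ U, h j ^ 2))
    (hM : 0 ≤ M) (hdom : ∀ k ∈ Uᶜ, s * |h k| ≤ M) :
    √(∑ j ∈ U, h j ^ 2) ≤
      √(∑ i, (X *ᵥ h) i ^ 2) / √Λ + θ / (√s * Λ) * (M + ∑ j ∈ Uᶜ, |h j|) := by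
  set u := (U : Set ι).indicator h
  set a := √(∑ j ∈ U, h j ^ 2)
  set b := √(∑ i, (X *ᵥ u) i ^ 2)
  set K := √(∑ i, (X *ᵥ h) i ^ 2)
  set c := (X *ᵥ u) ᵥ* X
  have hpair : ∀ T : Finset ι, ∑ j ∈ T, c j * h j = X *ᵥ u ⬝ᵥ X *ᵥ (T : Set ι).indicator h :=
    fun T => by rw [dotProduct_mulVec, dotProduct_indicator]
  have htail : |∑ j ∈ Uᶜ, c j * h j| ≤ θ * a * ((M + ∑ j ∈ Uᶜ, |h j|) / √s) := by
    refine abs_sum_le_of_abs_sum_le_sparse hs (by positivity) Uᶜ (fun T hT hTcard => ?_) hM hdom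
    rw [hpair, dotProduct_comm, mul_right_comm]
    exact hRO T hT hTcard
  have hsplit : b ^ 2 = X *ᵥ u ⬝ᵥ X *ᵥ h - ∑ j ∈ Uᶜ, c j * h j := by
    -- `h_{Uᶜ} = h - u`
    rw [hpair, coe_compl, Set.indicator_compl, Matrix.mulVec_sub, dotProduct_sub, sub_sub_cancel,
      Real.sq_sqrt (sum_nonneg fun _ _ => sq_nonneg _), dotProduct]
    simp only [sq]
    rfl
  have hCS : X *ᵥ u ⬝ᵥ X *ᵥ h ≤ b * K := Real.sum_mul_le_sqrt_mul_sqrt _ _ _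
  have hlower : √Λ * a ≤ b := by
    rw [← Real.sqrt_mul hΛ.le]
    exact Real.sqrt_le_sqrt hRE
  have key := le_div_add_div_sq_of_sq_le_mul_add (K := K) (Real.sqrt_pos.mpr hΛ)
    (Real.sqrt_nonneg _) (by positivity : 0 ≤ θ * ((M + ∑ j ∈ Uᶜ, |h j|) / √s)) hlower
    (by linarith [neg_le_abs (∑ j ∈ Uᶜ, c j * h j)])
  rw [Real.sq_sqrt hΛ.le] at key
  convert key using 2
  field_simp

end

end

/-- Cone decomposition bound (Candès–Tao Lemma 3.1 generalization). -/
theorem stmt11 (n p s0 : ℕ) (hs0 : 0 < s0) (hn : 0 < n)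
    (X : Matrix (Fin n) (Fin p) ℝ) (Λmin θ : ℝ) (hΛmin : 0 < Λmin) (hθ0 : 0 ≤ θ)
    (hRE : ∀ (v : Fin p → ℝ) (T : Finset (Fin p)), T.card ≤ 2 * s0 →
      (∀ j ∉ T, v j = 0) →
      Λmin * n * (∑ j, (v j) ^ 2) ≤ ∑ i, (X.mulVec v i) ^ 2)
    (hθ : ∀ (u v : Fin p → ℝ) (T T' : Finset (Fin p)), Disjoint T T' →
      T.card ≤ s0 → T'.card ≤ 2 * s0 →
      (∀ j ∉ T, u j = 0) → (∀ j ∉ T', v j = 0) →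
      |∑ i, (X.mulVec u i) * (X.mulVec v i)| ≤
        θ * n * Real.sqrt (∑ j, (u j) ^ 2) * Real.sqrt (∑ j, (v j) ^ 2))
    (h : Fin p → ℝ) (T0 T1 : Finset (Fin p)) (hT0card : T0.card = s0)
    (hT1disj : Disjoint T0 T1) (hT1card : T1.card ≤ s0)
    (hT1full : T1.card = s0 ∨ T0 ∪ T1 = Finset.univ)
    (hT1max : ∀ j ∈ T1, ∀ k, k ∉ T0 → k ∉ T1 → |h k| ≤ |h j|) :
    Real.sqrt (∑ j ∈ T0 ∪ T1, (h j) ^ 2) ≤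
      Real.sqrt (∑ i, (X.mulVec h i) ^ 2) / (Real.sqrt Λmin * Real.sqrt (n : ℝ)) +
        θ / (Real.sqrt (s0 : ℝ) * Λmin) * (∑ j ∈ T0ᶜ, |h j|) ∧
    (∑ j ∈ (T0 ∪ T1)ᶜ, (h j) ^ 2) ≤ (∑ j ∈ T0ᶜ, |h j|) ^ 2 / (s0 : ℝ) ∧
    (∑ j, (h j) ^ 2) ≤
      (∑ j ∈ T0 ∪ T1, (h j) ^ 2) + (∑ j ∈ T0ᶜ, |h j|) ^ 2 / (s0 : ℝ) := by
  set U := T0 ∪ T1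
  have hUcard : U.card ≤ 2 * s0 := (card_union_le T0 T1).trans (by omega)
  have hdom : ∀ k ∈ Uᶜ, (s0 : ℝ) * |h k| ≤ ∑ j ∈ T1, |h j| := by
    intro k hk
    have hkU : k ∉ T0 ∧ k ∉ T1 := by simpa [U] using hk
    rcases hT1full with hcard | huniv
    · have := card_nsmul_le_sum T1 (|h ·|) _ fun j hj => hT1max j hj k hkU.1 hkU.2
      rwa [nsmul_eq_mul, hcard] at this
    · simp [U, huniv] at hk
  have hsplit : ∑ j ∈ T0ᶜ, |h j| = ∑ j ∈ T1, |h j| + ∑ j ∈ Uᶜ, |h j| := by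
    rw [add_comm, ← sum_sdiff (subset_compl_iff_disjoint_left.mpr hT1disj), sdiff_eq_inter_compl,
      compl_union]
  have hM : 0 ≤ ∑ j ∈ T1, |h j| := sum_nonneg fun _ _ => abs_nonneg _
  have htail := sum_sq_le_sq_add_sum_abs_div hs0 hM hdom
  rw [← hsplit] at htail
  refine ⟨?_, htail, by linarith [sum_add_sum_compl U (h · ^ 2)]⟩
  have hsupp : ∀ T : Finset (Fin p), ∀ j ∉ T, (T : Set (Fin p)).indicator h j = 0 :=
    fun T j hj => Set.indicator_of_notMem (by simpa) h
  have key := sqrt_sum_sq_le_of_restricted_orthogonality X (Λ := Λmin * n) (θ := θ * n)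
    (by positivity) (by positivity) hs0 U
    (by simpa [sum_sq_indicator] using hRE _ U hUcard (hsupp U))
    (fun T hT hTcard => by
      simpa [sum_sq_indicator, dotProduct, mul_assoc] using
        hθ _ _ T U (subset_compl_iff_disjoint_right.mp hT) hTcard hUcard (hsupp T) (hsupp U))
    hM hdom
  rw [← hsplit, Real.sqrt_mul hΛmin.le] at key
  convert key using 2
  field_simp
end

section
/- If h ∈ ℝ^p, T_0 has size s_0, and T_1 is the set of the s_0 largest |h_j| over j ∉ T_0, then the k-th largest value (for k ≥ s_0+1) of |h| on T_0^c is at most ‖h_{T_0^c}‖₁/k, and consequently ‖h_{(T_0∪T_1)^c}‖₂² ≤ ‖h_{T_0^c}‖₁² ∑_{k≥s_0+1} 1/k² ≤ ‖h_{T_0^c}‖₁²/s_0. -/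
/-!
If `j ∉ T₀ ∪ T₁` then `|h j|` is dominated by each of the `s₀` values `|h i|`, `i ∈ T₁`, so
`(s₀ + 1) |h j| ≤ ‖h_{T₀ᶜ}‖₁`. Hence `∑ h_j² ≤ (max |h_j|) ∑ |h_j| ≤ ‖h_{T₀ᶜ}‖₁² / (s₀ + 1)`
over `(T₀ ∪ T₁)ᶜ`, which is below both claimed bounds because
`1 / (s₀ + 1) ≤ ∑_{k > s₀} 1 / k²` by comparison with the telescoping series `1/k - 1/(k+1)`.
-/

open Finset Filter

theorem one_div_le_tsum_one_div_add_sq {c : ℝ} (hc : 0 < c) :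
    1 / c ≤ ∑' k : ℕ, 1 / ((k : ℝ) + c) ^ 2 := by
  have hsumm : Summable fun k : ℕ => 1 / ((k : ℝ) + c) ^ 2 :=
    ((Real.summable_one_div_nat_add_rpow c 2).2 one_lt_two).congr fun k => by
      rw [abs_of_pos (by positivity), Real.rpow_two]
  have hpartial : ∀ n : ℕ, 1 / c - 1 / ((n : ℝ) + c) ≤ ∑' k : ℕ, 1 / ((k : ℝ) + c) ^ 2 := by
    intro n
    have htelescope : ∑ k ∈ range n, (1 / ((k : ℝ) + c) - 1 / (((k + 1 : ℕ) : ℝ) + c))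
        = 1 / c - 1 / ((n : ℝ) + c) := by
      simpa using sum_range_sub' (fun k : ℕ => 1 / ((k : ℝ) + c)) n
    rw [← htelescope]
    refine le_trans (sum_le_sum fun k _ => ?_) (hsumm.sum_le_tsum _ fun k _ => by positivity)
    have hk : 0 < (k : ℝ) + c := by positivity
    rw [Nat.cast_succ, div_sub_div _ _ hk.ne' (by positivity), div_le_div_iff₀ (by positivity)
      (by positivity)]
    nlinarith
  have hlim : Tendsto (fun n : ℕ => 1 / c - 1 / ((n : ℝ) + c)) atTop (nhds (1 / c)) := by
    simpa using tendsto_const_nhds.sub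
      (tendsto_atTop_add_const_right _ c tendsto_natCast_atTop_atTop).inv_tendsto_atTop
  exact le_of_tendsto' hlim hpartial

section OrderedSum

variable {ι M : Type*} [AddCommMonoid M] [PartialOrder M] [IsOrderedAddMonoid M]
  {f : ι → M} {K A : Finset ι}

theorem Finset.card_nsmul_le_sum_of_subset {c : M} (hKA : K ⊆ A) (hf : ∀ i ∈ A, 0 ≤ f i)
    (hc : ∀ i ∈ K, c ≤ f i) : #K • c ≤ ∑ i ∈ A, f i :=
  (card_nsmul_le_sum K f c hc).trans (sum_le_sum_of_subset_of_nonneg hKA fun i hi _ => hf i hi)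

theorem Finset.card_add_one_nsmul_le_sum [DecidableEq ι] {j : ι} (hKA : K ⊆ A) (hjA : j ∈ A)
    (hjK : j ∉ K) (hf : ∀ i ∈ A, 0 ≤ f i) (hj : ∀ i ∈ K, f j ≤ f i) :
    (#K + 1) • f j ≤ ∑ i ∈ A, f i := by
  rw [← card_insert_of_notMem hjK]
  refine card_nsmul_le_sum_of_subset (insert_subset hjA hKA) hf fun i hi => ?_
  rcases mem_insert.1 hi with rfl | hi
  exacts [le_rfl, hj i hi]

end OrderedSum

theorem Finset.sum_sq_le_mul_sum {ι R : Type*} [CommSemiring R] [PartialOrder R]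
    [IsOrderedRing R] {f : ι → R} {B : Finset ι} {m : R} (hf : ∀ j ∈ B, 0 ≤ f j)
    (hm : ∀ j ∈ B, f j ≤ m) : ∑ j ∈ B, f j ^ 2 ≤ m * ∑ j ∈ B, f j := by
  rw [mul_sum]
  exact sum_le_sum fun j hj => by
    rw [sq]; exact mul_le_mul_of_nonneg_right (hm j hj) (hf j hj)

section Tail

variable {ι : Type*} [Fintype ι] [DecidableEq ι] (h : ι → ℝ) {T0 T1 : Finset ι}

theorem card_add_one_mul_abs_le_sum_abs_compl (hdisj : Disjoint T0 T1)
    (hmax : ∀ j ∈ T1, ∀ k, k ∉ T0 → k ∉ T1 → |h k| ≤ |h j|) {j : ι} (hj : j ∉ T0 ∪ T1) :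
    (#T1 + 1 : ℝ) * |h j| ≤ ∑ i ∈ T0ᶜ, |h i| := by
  rw [mem_union, not_or] at hj
  have := card_add_one_nsmul_le_sum (f := fun i => |h i|)
    (fun i hi => mem_compl.2 (disjoint_right.1 hdisj hi)) (mem_compl.2 hj.1) hj.2
    (fun i _ => abs_nonneg _) (fun i hi => hmax i hi j hj.1 hj.2)
  simpa [nsmul_eq_mul] using this

theorem sum_sq_compl_union_le (hdisj : Disjoint T0 T1)
    (hmax : ∀ j ∈ T1, ∀ k, k ∉ T0 → k ∉ T1 → |h k| ≤ |h j|) :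
    ∑ j ∈ (T0 ∪ T1)ᶜ, h j ^ 2 ≤ (∑ i ∈ T0ᶜ, |h i|) ^ 2 / (#T1 + 1) := by
  set S := ∑ i ∈ T0ᶜ, |h i|
  have hS : 0 ≤ S := sum_nonneg fun i _ => abs_nonneg _
  have hbound : ∀ j ∈ (T0 ∪ T1)ᶜ, |h j| ≤ S / (#T1 + 1) := fun j hj => by
    rw [le_div_iff₀ (by positivity), mul_comm]
    exact card_add_one_mul_abs_le_sum_abs_compl h hdisj hmax (mem_compl.1 hj)
  calc ∑ j ∈ (T0 ∪ T1)ᶜ, h j ^ 2 = ∑ j ∈ (T0 ∪ T1)ᶜ, |h j| ^ 2 := by simp only [sq_abs]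
    _ ≤ S / (#T1 + 1) * ∑ j ∈ (T0 ∪ T1)ᶜ, |h j| :=
      sum_sq_le_mul_sum (fun j _ => abs_nonneg _) hbound
    _ ≤ S / (#T1 + 1) * S := by
      gcongr
      exact sum_le_sum_of_subset_of_nonneg (compl_subset_compl.2 subset_union_left)
        fun i _ _ => abs_nonneg _
    _ = S ^ 2 / (#T1 + 1) := by ring

end Tail

theorem stmt12_general (p s0 : ℕ) (hs0 : 0 < s0) (h : Fin p → ℝ)
    (T0 T1 : Finset (Fin p))
    (hT1disj : Disjoint T0 T1)
    (hT1full : T1.card = s0 ∨ T0 ∪ T1 = Finset.univ)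
    (hT1max : ∀ j ∈ T1, ∀ k, k ∉ T0 → k ∉ T1 → |h k| ≤ |h j|) :
    (∀ j, j ∉ T0 → ∀ K : Finset (Fin p),
      (∀ i ∈ K, i ∉ T0 ∧ |h j| ≤ |h i|) →
      (K.card : ℝ) * |h j| ≤ ∑ i ∈ T0ᶜ, |h i|) ∧
    (∑ j ∈ (T0 ∪ T1)ᶜ, (h j) ^ 2) ≤
      (∑ i ∈ T0ᶜ, |h i|) ^ 2 * (∑' k : ℕ, 1 / ((k : ℝ) + (s0 : ℝ) + 1) ^ 2) ∧
    (∑ j ∈ (T0 ∪ T1)ᶜ, (h j) ^ 2) ≤ (∑ i ∈ T0ᶜ, |h i|) ^ 2 / (s0 : ℝ) := by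
  set S := ∑ i ∈ T0ᶜ, |h i|
  have key : ∑ j ∈ (T0 ∪ T1)ᶜ, h j ^ 2 ≤ S ^ 2 / (s0 + 1) := by
    rcases hT1full with hcard | huniv
    · simpa [hcard] using sum_sq_compl_union_le h hT1disj hT1max
    · rw [huniv, compl_univ, sum_empty]
      positivity
  refine ⟨fun j _ K hK => ?_, ?_, key.trans ?_⟩
  · simpa [nsmul_eq_mul] using card_nsmul_le_sum_of_subset (fun i hi => mem_compl.2 (hK i hi).1)
      (fun i _ => abs_nonneg (h i)) fun i hi => (hK i hi).2
  · calc ∑ j ∈ (T0 ∪ T1)ᶜ, h j ^ 2 ≤ S ^ 2 * (1 / (s0 + 1)) := by rwa [mul_one_div]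
      _ ≤ S ^ 2 * ∑' k : ℕ, 1 / ((k : ℝ) + s0 + 1) ^ 2 := by
        gcongr
        simpa [add_assoc] using one_div_le_tsum_one_div_add_sq (c := (s0 : ℝ) + 1) (by positivity)
  · gcongr
    linarith

/-- The k-th largest value of |h| on T0ᶜ is at most ‖h_{T0ᶜ}‖₁/k, and the
tail energy bound ‖h_{(T0∪T1)ᶜ}‖₂² ≤ ‖h_{T0ᶜ}‖₁² ∑_{k ≥ s0+1} 1/k²
≤ ‖h_{T0ᶜ}‖₁²/s0. -/
theorem stmt12 (p s0 : ℕ) (hs0 : 0 < s0) (h : Fin p → ℝ)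
    (T0 T1 : Finset (Fin p)) (hT0card : T0.card = s0)
    (hT1disj : Disjoint T0 T1) (hT1card : T1.card ≤ s0)
    (hT1full : T1.card = s0 ∨ T0 ∪ T1 = Finset.univ)
    (hT1max : ∀ j ∈ T1, ∀ k, k ∉ T0 → k ∉ T1 → |h k| ≤ |h j|) :
    (∀ j, j ∉ T0 → ∀ K : Finset (Fin p),
      (∀ i ∈ K, i ∉ T0 ∧ |h j| ≤ |h i|) →
      (K.card : ℝ) * |h j| ≤ ∑ i ∈ T0ᶜ, |h i|) ∧
    (∑ j ∈ (T0 ∪ T1)ᶜ, (h j) ^ 2) ≤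
      (∑ i ∈ T0ᶜ, |h i|) ^ 2 * (∑' k : ℕ, 1 / ((k : ℝ) + (s0 : ℝ) + 1) ^ 2) ∧
    (∑ j ∈ (T0 ∪ T1)ᶜ, (h j) ^ 2) ≤ (∑ i ∈ T0ᶜ, |h i|) ^ 2 / (s0 : ℝ) :=
  stmt12_general p s0 hs0 h T0 T1 hT1disj hT1full hT1max
end

section
/- Prediction error of the thresholded OLS estimator: let I ⊆ {1,...,p} with |I| ≤ 2s_0, D = I^c, β̂_I = (X_IᵀX_I)^{-1}X_IᵀY the OLS estimator, Y = Xβ + ε. If ‖β_D‖₂ ≤ C√s_0·λσ, ‖Xᵀε/n‖_∞ ≤ λ_{σ,a,p} = √(1+a)·λσ, Λ_max(s) bounds the restricted largest eigenvalue over s-sparse vectors, and Λ_min(|I|), Λ_max(|I|) bound the eigenvalues of X_IᵀX_I/n, then ‖Xβ̂_I − Xβ‖₂/√n ≤ √(Λ_max(s))·‖β_D‖₂ + √(|I|Λ_max(|I|))·λ_{σ,a,p}/Λ_min(|I|) ≤ C'·λσ·√s_0 for some constant C' depending on C, a and the eigenvalue bounds. -/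
/-!
Write `β_D` for `β` with the coordinates in `I` set to zero and `u = β̂ - β + β_D` for the error
of `β̂` on `I`, so that `Xβ̂ - Xβ = Xu - Xβ_D`. The normal equations say that the residual
`ε - (Xu - Xβ_D)` is orthogonal to `Xu`, i.e. `⟨Xu, Xu - Xβ_D⟩ = ⟨u, Xᵀε⟩`. The right-hand side is
at most `√|I| · nλ · ‖u‖ ≤ κ ‖Xu‖` with `κ² = |I| n λ² / Λ_min`, and expanding the square gives
`‖Xu - Xβ_D‖² = ‖Xβ_D‖² - ‖Xu‖² + 2⟨Xu, Xu - Xβ_D⟩ ≤ ‖Xβ_D‖² + κ²`. Finally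
`‖Xβ_D‖² ≤ n Λ_max(s) ‖β_D‖²` by sparsity, and `Λ_min ≤ Λ_max(|I|)` turns `κ²` into the stated term.
-/

open Matrix
open scoped Finset

section
variable {m ι : Type*} [Fintype m] [Fintype ι]

lemma sum_sq_eq_dotProduct (v : m → ℝ) : ∑ i, v i ^ 2 = v ⬝ᵥ v := by
  simp only [dotProduct, sq]

lemma sub_dotProduct_sub_le_add_sq {x y : m → ℝ} {κ : ℝ}
    (h : x ⬝ᵥ (x - y) ≤ κ * √(x ⬝ᵥ x)) : (x - y) ⬝ᵥ (x - y) ≤ y ⬝ᵥ y + κ ^ 2 := by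
  have hx : √(x ⬝ᵥ x) ^ 2 = x ⬝ᵥ x := by
    rw [← sum_sq_eq_dotProduct]
    exact Real.sq_sqrt (by positivity)
  have hexpand : (x - y) ⬝ᵥ (x - y) = y ⬝ᵥ y - x ⬝ᵥ x + 2 * (x ⬝ᵥ (x - y)) := by
    simp only [sub_dotProduct, dotProduct_sub, dotProduct_comm y x]
    ring
  nlinarith [sq_nonneg (√(x ⬝ᵥ x) - κ)]

lemma mulVec_dotProduct_eq_zero {R : Type*} [CommSemiring R] {X : Matrix m ι R} {I : Finset ι}
    {u : ι → R} {w : m → R} (hu : ∀ j ∉ I, u j = 0) (hw : ∀ j ∈ I, (w ᵥ* X) j = 0) :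
    X *ᵥ u ⬝ᵥ w = 0 := by
  rw [dotProduct_comm, dotProduct_mulVec]
  refine Finset.sum_eq_zero fun j _ => ?_
  by_cases hj : j ∈ I
  · simp [hw j hj]
  · simp [hu j hj]

lemma dotProduct_le_sqrt_card_mul {I : Finset ι} {u g : ι → ℝ} {c : ℝ}
    (hu : ∀ j ∉ I, u j = 0) (hg : ∀ j, |g j| ≤ c) :
    u ⬝ᵥ g ≤ √(#I * c ^ 2) * √(u ⬝ᵥ u) := by
  have hug : u ⬝ᵥ g = ∑ j ∈ I, u j * g j :=
    (Finset.sum_subset (Finset.subset_univ I) fun j _ hj => by simp [hu j hj]).symm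
  have hu2 : ∑ j ∈ I, u j ^ 2 = u ⬝ᵥ u := by
    rw [← sum_sq_eq_dotProduct]
    exact Finset.sum_subset (Finset.subset_univ I) fun j _ hj => by simp [hu j hj]
  have hg2 : ∑ j ∈ I, g j ^ 2 ≤ #I * c ^ 2 := by
    simpa using Finset.sum_le_sum fun j (_ : j ∈ I) =>
      sq_le_sq' (abs_le.1 (hg j)).1 (abs_le.1 (hg j)).2
  calc u ⬝ᵥ g ≤ √(∑ j ∈ I, u j ^ 2) * √(∑ j ∈ I, g j ^ 2) :=
        hug ▸ Real.sum_mul_le_sqrt_mul_sqrt I u g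
    _ ≤ √(#I * c ^ 2) * √(u ⬝ᵥ u) := by
      rw [hu2, mul_comm]
      gcongr

lemma le_of_restricted_eigenvalue_bounds [DecidableEq ι] {X : Matrix m ι ℝ} {I : Finset ι}
    {a b : ℝ} (hI : I.Nonempty)
    (h : ∀ v : ι → ℝ, (∀ j ∉ I, v j = 0) →
      a * ∑ j, v j ^ 2 ≤ ∑ i, (X *ᵥ v) i ^ 2 ∧ ∑ i, (X *ᵥ v) i ^ 2 ≤ b * ∑ j, v j ^ 2) :
    a ≤ b := by
  obtain ⟨j₀, hj₀⟩ := hI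
  have hsupp : ∀ j ∉ I, Pi.single (M := fun _ => ℝ) j₀ 1 j = 0 := fun j hj =>
    Pi.single_eq_of_ne (by rintro rfl; exact hj hj₀) _
  simpa [Pi.single_apply] using (h _ hsupp).1.trans (h _ hsupp).2

lemma sum_sq_ite_mem [DecidableEq ι] (I : Finset ι) (β : ι → ℝ) :
    ∑ j, (if j ∈ I then 0 else β j) ^ 2 = ∑ j ∈ Iᶜ, β j ^ 2 := by
  simp [ite_pow, Finset.sum_ite, Finset.filter_not, Finset.compl_eq_univ_sdiff]

lemma sum_sq_mulVec_ite_le [DecidableEq ι] {X : Matrix m ι ℝ} {I : Finset ι} {β : ι → ℝ} {s : ℕ}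
    {L : ℝ} (hRE : ∀ (v : ι → ℝ) (T : Finset ι), #T ≤ s → (∀ j ∉ T, v j = 0) →
      ∑ i, (X *ᵥ v) i ^ 2 ≤ L * ∑ j, v j ^ 2)
    (hsparse : ∃ T : Finset ι, #T ≤ s ∧ ∀ j ∉ T, j ∈ I ∨ β j = 0) :
    ∑ i, (X *ᵥ fun j => if j ∈ I then 0 else β j) i ^ 2 ≤ L * ∑ j ∈ Iᶜ, β j ^ 2 := by
  obtain ⟨T, hT, hβT⟩ := hsparse
  rw [← sum_sq_ite_mem]
  exact hRE _ T hT fun j hj => by rcases hβT j hj with h | h <;> simp [h]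

theorem sum_sq_mulVec_sub_le_of_normal_eq [DecidableEq ι] (X : Matrix m ι ℝ) (I : Finset ι)
    (β βhat : ι → ℝ) (Y ε : m → ℝ) (c ℓ : ℝ) (hY : ∀ i, Y i = (X *ᵥ β) i + ε i) (hℓ : 0 < ℓ)
    (hmin : ∀ v : ι → ℝ, (∀ j ∉ I, v j = 0) → ℓ * ∑ j, v j ^ 2 ≤ ∑ i, (X *ᵥ v) i ^ 2)
    (hnoise : ∀ j, |∑ i, X i j * ε i| ≤ c) (hsupp : ∀ j ∉ I, βhat j = 0)
    (hnormal : ∀ j ∈ I, ∑ i, X i j * (Y i - (X *ᵥ βhat) i) = 0) :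
    ∑ i, ((X *ᵥ βhat) i - (X *ᵥ β) i) ^ 2 ≤
      ∑ i, (X *ᵥ fun j => if j ∈ I then 0 else β j) i ^ 2 + #I * c ^ 2 / ℓ := by
  set βD : ι → ℝ := fun j => if j ∈ I then 0 else β j
  set u := βhat - β + βD
  have hu : ∀ j ∉ I, u j = 0 := fun j hj => by simp [u, βD, hj, hsupp j hj]
  have hpred : X *ᵥ βhat - X *ᵥ β = X *ᵥ u - X *ᵥ βD := by
    simp only [u, mulVec_add, mulVec_sub]
    abel
  have hresid : Y - X *ᵥ βhat = ε - (X *ᵥ u - X *ᵥ βD) := by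
    rw [← hpred, show Y = X *ᵥ β + ε from funext hY]
    abel
  have horth : X *ᵥ u ⬝ᵥ (Y - X *ᵥ βhat) = 0 :=
    mulVec_dotProduct_eq_zero hu fun j hj => by
      simpa [vecMul, dotProduct, mul_comm] using hnormal j hj
  have hnoise' : ∀ j, |(ε ᵥ* X) j| ≤ c := fun j => by
    simpa [vecMul, dotProduct, mul_comm] using hnoise j
  have hmin' : ℓ * (u ⬝ᵥ u) ≤ X *ᵥ u ⬝ᵥ X *ᵥ u := by
    simpa only [sum_sq_eq_dotProduct] using hmin u hu
  have hκ : X *ᵥ u ⬝ᵥ (X *ᵥ u - X *ᵥ βD) ≤ √(#I * c ^ 2 / ℓ) * √(X *ᵥ u ⬝ᵥ X *ᵥ u) := by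
    calc X *ᵥ u ⬝ᵥ (X *ᵥ u - X *ᵥ βD) = u ⬝ᵥ ε ᵥ* X := by
          rw [hresid, dotProduct_sub, sub_eq_zero] at horth
          rw [← horth, dotProduct_comm, dotProduct_mulVec, dotProduct_comm]
      _ ≤ √(#I * c ^ 2) * √(u ⬝ᵥ u) := dotProduct_le_sqrt_card_mul hu hnoise'
      _ ≤ √(#I * c ^ 2 / ℓ) * √(X *ᵥ u ⬝ᵥ X *ᵥ u) := by
          rw [Real.sqrt_div' _ hℓ.le, div_mul_eq_mul_div, le_div_iff₀ (Real.sqrt_pos.2 hℓ),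
            mul_assoc, ← Real.sqrt_mul' _ hℓ.le]
          gcongr
          linarith
  have hκsq : √(#I * c ^ 2 / ℓ) ^ 2 = #I * c ^ 2 / ℓ := Real.sq_sqrt (by positivity)
  simpa only [sum_sq_eq_dotProduct, ← Pi.sub_apply, hpred, hκsq] using
    sub_dotProduct_sub_le_add_sq hκ

end

lemma sqrt_mul_le_sqrt_mul {k k' Λ : ℝ} (hk : 0 ≤ k) (hkk' : k ≤ k') : √(k * Λ) ≤ √(k' * Λ) := by
  rcases le_or_gt 0 Λ with hΛ | hΛ
  · exact Real.sqrt_le_sqrt (mul_le_mul_of_nonneg_right hkk' hΛ)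
  · rw [Real.sqrt_eq_zero'.2 (mul_nonpos_of_nonneg_of_nonpos hk hΛ.le)]
    exact Real.sqrt_nonneg _

lemma sqrt_div_sqrt_le {r M x : ℝ} (hM : 0 ≤ M) (hx : 0 < x) (h : r ≤ M ^ 2 * x) :
    √r / √x ≤ M := by
  rw [div_le_iff₀ (Real.sqrt_pos.2 hx)]
  calc √r ≤ √(M ^ 2 * x) := Real.sqrt_le_sqrt h
    _ = M * √x := by rw [Real.sqrt_mul (sq_nonneg _), Real.sqrt_sq hM]

lemma card_mul_sq_div_le_sq_mul {k Λ Λ' t x : ℝ} (hk : 0 ≤ k) (hΛ : 0 < Λ) (hx : 0 < x)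
    (hkΛ : k * Λ ≤ k * Λ') : k * (x * t) ^ 2 / (Λ * x) ≤ (√(k * Λ') * t / Λ) ^ 2 * x := by
  have hsq : (√(k * Λ') * t / Λ) ^ 2 = k * Λ' * t ^ 2 / Λ ^ 2 := by
    rw [div_pow, mul_pow, Real.sq_sqrt (hkΛ.trans' (by positivity))]
  rw [hsq, show k * (x * t) ^ 2 / (Λ * x) = k * Λ * t ^ 2 / Λ ^ 2 * x by field_simp]
  gcongr ?_ * _ / _ * _

lemma sqrt_card_mul_le {k s0 : ℕ} {Λ a : ℝ} (hk : k ≤ 2 * s0) (ha : 0 ≤ a) :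
    √(k * Λ) * √(1 + a) ≤ √(2 * (1 + a) * Λ) * √s0 := by
  have hk' : (k : ℝ) ≤ 2 * s0 := by exact_mod_cast hk
  calc √(k * Λ) * √(1 + a) ≤ √(2 * s0 * Λ) * √(1 + a) :=
        mul_le_mul_of_nonneg_right (sqrt_mul_le_sqrt_mul (by positivity) hk') (Real.sqrt_nonneg _)
    _ = √(2 * (1 + a) * Λ) * √s0 := by
        rw [← Real.sqrt_mul' _ (by positivity), ← Real.sqrt_mul' _ (by positivity)]
        ring_nf

theorem stmt14_general (n p s s0 : ℕ) (hn : 0 < n)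
    (X : Matrix (Fin n) (Fin p) ℝ) (Y : Fin n → ℝ) (β : Fin p → ℝ)
    (ε : Fin n → ℝ) (hY : ∀ i, Y i = X.mulVec β i + ε i)
    (I : Finset (Fin p)) (hIcard : I.card ≤ 2 * s0)
    (C a lam σ lamnoise Λmaxs ΛminI ΛmaxI : ℝ)
    (ha : 0 ≤ a) (hlam : 0 < lam) (hσ : 0 < σ)
    (hΛminI : 0 < ΛminI) (hΛmaxs : 0 ≤ Λmaxs)
    (hlamnoise : lamnoise = Real.sqrt (1 + a) * lam * σ)
    (hΛmaxsRE : ∀ (v : Fin p → ℝ) (T : Finset (Fin p)), T.card ≤ s →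
      (∀ j ∉ T, v j = 0) →
      ∑ i, (X.mulVec v i) ^ 2 ≤ Λmaxs * n * (∑ j, (v j) ^ 2))
    (hIRE : ∀ v : Fin p → ℝ, (∀ j ∉ I, v j = 0) →
      ΛminI * n * (∑ j, (v j) ^ 2) ≤ ∑ i, (X.mulVec v i) ^ 2 ∧
      ∑ i, (X.mulVec v i) ^ 2 ≤ ΛmaxI * n * (∑ j, (v j) ^ 2))
    (hβDsparse : ∃ T : Finset (Fin p), T.card ≤ s ∧ ∀ j ∉ T, j ∈ I ∨ β j = 0)
    (hβD : Real.sqrt (∑ j ∈ Iᶜ, (β j) ^ 2) ≤ C * Real.sqrt (s0 : ℝ) * lam * σ)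
    (hnoise : ∀ j, |∑ i, X i j * ε i| / n ≤ lamnoise)
    (βhat : Fin p → ℝ) (hβhatsupp : ∀ j ∉ I, βhat j = 0)
    (hnormal : ∀ j ∈ I, ∑ i, X i j * (Y i - X.mulVec βhat i) = 0) :
    Real.sqrt (∑ i, (X.mulVec βhat i - X.mulVec β i) ^ 2) / Real.sqrt (n : ℝ) ≤
      Real.sqrt Λmaxs * Real.sqrt (∑ j ∈ Iᶜ, (β j) ^ 2) +
        Real.sqrt ((I.card : ℝ) * ΛmaxI) * lamnoise / ΛminI ∧
    Real.sqrt (∑ i, (X.mulVec βhat i - X.mulVec β i) ^ 2) / Real.sqrt (n : ℝ) ≤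
      (Real.sqrt Λmaxs * C + Real.sqrt (2 * (1 + a) * ΛmaxI) / ΛminI) *
        lam * σ * Real.sqrt (s0 : ℝ) := by
  have hn' : (0 : ℝ) < n := by exact_mod_cast hn
  have hlamnoise0 : 0 ≤ lamnoise := hlamnoise ▸ by positivity
  have hcardΛ : (#I : ℝ) * ΛminI ≤ #I * ΛmaxI := by
    rcases I.eq_empty_or_nonempty with hI | hI
    · simp [hI]
    · exact mul_le_mul_of_nonneg_left
        (le_of_mul_le_mul_right (le_of_restricted_eigenvalue_bounds hI hIRE) hn') (by positivity)
  set A := √Λmaxs * √(∑ j ∈ Iᶜ, β j ^ 2)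
  set B := √(#I * ΛmaxI) * lamnoise / ΛminI
  have hpred : √(∑ i, ((X *ᵥ βhat) i - (X *ᵥ β) i) ^ 2) / √n ≤ A + B := by
    refine sqrt_div_sqrt_le (by positivity) hn' ?_
    calc _ ≤ _ := sum_sq_mulVec_sub_le_of_normal_eq X I β βhat Y ε (n * lamnoise) (ΛminI * n)
            hY (by positivity) (fun v hv => (hIRE v hv).1)
            (fun j => (div_le_iff₀' hn').1 (hnoise j)) hβhatsupp hnormal
      _ ≤ A ^ 2 * n + B ^ 2 * n := by
          gcongr
          · rw [mul_pow, Real.sq_sqrt hΛmaxs, Real.sq_sqrt (by positivity), mul_right_comm]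
            exact sum_sq_mulVec_ite_le hΛmaxsRE hβDsparse
          · exact card_mul_sq_div_le_sq_mul (by positivity) hΛminI hn' hcardΛ
      _ ≤ (A + B) ^ 2 * n := by
          nlinarith [mul_nonneg (by positivity : 0 ≤ A) (by positivity : 0 ≤ B)]
  refine ⟨hpred, hpred.trans ?_⟩
  have hA : A ≤ √Λmaxs * (C * √s0 * lam * σ) := mul_le_mul_of_nonneg_left hβD (Real.sqrt_nonneg _)
  have hB : B ≤ √(2 * (1 + a) * ΛmaxI) * √s0 * (lam * σ) / ΛminI := by
    simp only [B, hlamnoise, ← mul_assoc]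
    gcongr ?_ * _ * _ / _
    exact sqrt_card_mul_le hIcard ha
  calc A + B ≤ _ := add_le_add hA hB
    _ = _ := by ring

/-- Prediction error of the thresholded OLS estimator. -/
theorem stmt14 (n p s s0 : ℕ) (hn : 0 < n)
    (X : Matrix (Fin n) (Fin p) ℝ) (Y : Fin n → ℝ) (β : Fin p → ℝ)
    (ε : Fin n → ℝ) (hY : ∀ i, Y i = X.mulVec β i + ε i)
    (I : Finset (Fin p)) (hIcard : I.card ≤ 2 * s0)
    (C a lam σ lamnoise Λmaxs ΛminI ΛmaxI : ℝ)
    (ha : 0 ≤ a) (hlam : 0 < lam) (hσ : 0 < σ) (hC : 0 ≤ C)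
    (hΛminI : 0 < ΛminI) (hΛmaxs : 0 ≤ Λmaxs)
    (hlamnoise : lamnoise = Real.sqrt (1 + a) * lam * σ)
    (hΛmaxsRE : ∀ (v : Fin p → ℝ) (T : Finset (Fin p)), T.card ≤ s →
      (∀ j ∉ T, v j = 0) →
      ∑ i, (X.mulVec v i) ^ 2 ≤ Λmaxs * n * (∑ j, (v j) ^ 2))
    (hIRE : ∀ v : Fin p → ℝ, (∀ j ∉ I, v j = 0) →
      ΛminI * n * (∑ j, (v j) ^ 2) ≤ ∑ i, (X.mulVec v i) ^ 2 ∧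
      ∑ i, (X.mulVec v i) ^ 2 ≤ ΛmaxI * n * (∑ j, (v j) ^ 2))
    (hβDsparse : ∃ T : Finset (Fin p), T.card ≤ s ∧ ∀ j ∉ T, j ∈ I ∨ β j = 0)
    (hβD : Real.sqrt (∑ j ∈ Iᶜ, (β j) ^ 2) ≤ C * Real.sqrt (s0 : ℝ) * lam * σ)
    (hnoise : ∀ j, |∑ i, X i j * ε i| / n ≤ lamnoise)
    (βhat : Fin p → ℝ) (hβhatsupp : ∀ j ∉ I, βhat j = 0)
    (hnormal : ∀ j ∈ I, ∑ i, X i j * (Y i - X.mulVec βhat i) = 0) :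
    Real.sqrt (∑ i, (X.mulVec βhat i - X.mulVec β i) ^ 2) / Real.sqrt (n : ℝ) ≤
      Real.sqrt Λmaxs * Real.sqrt (∑ j ∈ Iᶜ, (β j) ^ 2) +
        Real.sqrt ((I.card : ℝ) * ΛmaxI) * lamnoise / ΛminI ∧
    Real.sqrt (∑ i, (X.mulVec βhat i - X.mulVec β i) ^ 2) / Real.sqrt (n : ℝ) ≤
      (Real.sqrt Λmaxs * C + Real.sqrt (2 * (1 + a) * ΛmaxI) / ΛminI) *
        lam * σ * Real.sqrt (s0 : ℝ) :=
  stmt14_general n p s s0 hn X Y β ε hY I hIcard C a lam σ lamnoise Λmaxs ΛminI ΛmaxI ha hlam hσ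
    hΛminI hΛmaxs hlamnoise hΛmaxsRE hIRE hβDsparse hβD hnoise βhat hβhatsupp hnormal
end

section
/- Projection-noise bound: if ‖Xᵀε/n‖_∞ ≤ λ_{σ,a,p}, X_IᵀX_I is invertible with eigenvalues of X_IᵀX_I/n in [Λ_min(|I|), Λ_max(|I|)], then ‖X_I(X_IᵀX_I)^{-1}X_Iᵀε‖₂/√n ≤ √(Λ_max(|I|))·√|I|·λ_{σ,a,p}/Λ_min(|I|). -/
/-!
Write `g = X_Iᵀ ε`, so that `‖g‖₂ ≤ √|I| · n λ`. The normal equations give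
`‖X c‖² = ⟨c, g⟩ ≤ ‖c‖ ‖g‖`, and the lower eigenvalue bound `n Λ_min ‖c‖² ≤ ‖X c‖²` then
yields `‖c‖ ≤ √|I| λ / Λ_min`. The upper eigenvalue bound `‖X c‖ ≤ √(n Λ_max) ‖c‖` finishes.
-/

open Finset Matrix

lemma sqrt_sum_sq_le_sqrt_card_mul {ι : Type*} {s : Finset ι} {g : ι → ℝ} {M : ℝ}
    (hM : 0 ≤ M) (hg : ∀ j ∈ s, |g j| ≤ M) : √(∑ j ∈ s, g j ^ 2) ≤ √(s.card : ℝ) * M := calc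
  √(∑ j ∈ s, g j ^ 2) ≤ √(∑ _j ∈ s, M ^ 2) :=
    Real.sqrt_le_sqrt <| sum_le_sum fun j hj =>
      sq_le_sq' (abs_le.1 (hg j hj)).1 (abs_le.1 (hg j hj)).2
  _ = √(s.card : ℝ) * M := by
    rw [sum_const, nsmul_eq_mul, Real.sqrt_mul' _ (sq_nonneg M), Real.sqrt_sq hM]

section

variable {m n : Type*} [Fintype m] [Fintype n]

lemma sum_sq_mulVec_eq_dotProduct (X : Matrix m n ℝ) (c : n → ℝ) :
    ∑ i, (X *ᵥ c) i ^ 2 = c ⬝ᵥ (Xᵀ *ᵥ (X *ᵥ c)) := by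
  rw [dotProduct_mulVec, vecMul_transpose]
  simp only [dotProduct, sq]

lemma dotProduct_eq_sum_of_support {I : Finset n} {c : n → ℝ} (hc : ∀ j ∉ I, c j = 0)
    (v : n → ℝ) : c ⬝ᵥ v = ∑ j ∈ I, c j * v j :=
  (sum_subset I.subset_univ fun j _ hj => by rw [hc j hj, zero_mul]).symm

lemma sum_sq_mulVec_eq_of_normal_eqns (X : Matrix m n ℝ) (ε : m → ℝ) {I : Finset n}
    {c : n → ℝ} (hc : ∀ j ∉ I, c j = 0)
    (hnormal : ∀ j ∈ I, ∑ i, X i j * ((X *ᵥ c) i - ε i) = 0) :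
    ∑ i, (X *ᵥ c) i ^ 2 = ∑ j ∈ I, c j * ∑ i, X i j * ε i := by
  rw [sum_sq_mulVec_eq_dotProduct, dotProduct_eq_sum_of_support hc]
  refine sum_congr rfl fun j hj => congrArg (c j * ·) ?_
  have h := hnormal j hj
  simp only [mul_sub, sum_sub_distrib, sub_eq_zero] at h
  simpa only [mulVec, dotProduct, transpose_apply] using h

lemma sqrt_sum_sq_le_of_normal_eqns (X : Matrix m n ℝ) (ε : m → ℝ) {I : Finset n}
    {c : n → ℝ} (hc : ∀ j ∉ I, c j = 0)
    (hnormal : ∀ j ∈ I, ∑ i, X i j * ((X *ᵥ c) i - ε i) = 0) {a M : ℝ} (ha : 0 < a)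
    (hmin : a * ∑ j, c j ^ 2 ≤ ∑ i, (X *ᵥ c) i ^ 2) (hM : 0 ≤ M)
    (hg : ∀ j ∈ I, |∑ i, X i j * ε i| ≤ M) :
    √(∑ j, c j ^ 2) ≤ √(I.card : ℝ) * M / a := by
  set s := √(∑ j, c j ^ 2)
  have hs : 0 ≤ s := Real.sqrt_nonneg _
  have hsupp : ∑ j ∈ I, c j ^ 2 = ∑ j, c j ^ 2 := by
    simp only [sq]
    exact (dotProduct_eq_sum_of_support hc c).symm
  have hCS : a * s ^ 2 ≤ s * (√(I.card : ℝ) * M) := calc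
    a * s ^ 2 ≤ ∑ j ∈ I, c j * ∑ i, X i j * ε i := by
      rw [Real.sq_sqrt (by positivity), ← sum_sq_mulVec_eq_of_normal_eqns X ε hc hnormal]
      exact hmin
    _ ≤ √(∑ j ∈ I, c j ^ 2) * √(∑ j ∈ I, (∑ i, X i j * ε i) ^ 2) :=
      Real.sum_mul_le_sqrt_mul_sqrt _ _ _
    _ ≤ s * (√(I.card : ℝ) * M) := by
      rw [hsupp]
      exact mul_le_mul_of_nonneg_left (sqrt_sum_sq_le_sqrt_card_mul hM hg) hs
  rw [le_div_iff₀ ha]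
  rcases hs.eq_or_lt with hs0 | hspos
  · rw [← hs0, zero_mul]
    positivity
  · have hK : s * (s * a) ≤ s * (√(I.card : ℝ) * M) := by linarith
    exact le_of_mul_le_mul_left hK hspos

end

/-- Projection-noise bound: the norm of the projection of the noise onto the
column space of X_I. -/
theorem stmt15 (n p : ℕ) (hn : 0 < n) (X : Matrix (Fin n) (Fin p) ℝ)
    (ε : Fin n → ℝ) (I : Finset (Fin p)) (ΛminI ΛmaxI lam : ℝ)
    (hΛminI : 0 < ΛminI) (hlam : 0 < lam)
    (hIRE : ∀ v : Fin p → ℝ, (∀ j ∉ I, v j = 0) →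
      ΛminI * n * (∑ j, (v j) ^ 2) ≤ ∑ i, (X.mulVec v i) ^ 2 ∧
      ∑ i, (X.mulVec v i) ^ 2 ≤ ΛmaxI * n * (∑ j, (v j) ^ 2))
    (hnoise : ∀ j, |∑ i, X i j * ε i| / n ≤ lam)
    (c : Fin p → ℝ) (hc : ∀ j ∉ I, c j = 0)
    (hnormal : ∀ j ∈ I, ∑ i, X i j * (X.mulVec c i - ε i) = 0) :
    Real.sqrt (∑ i, (X.mulVec c i) ^ 2) / Real.sqrt (n : ℝ) ≤
      Real.sqrt ΛmaxI * Real.sqrt (I.card : ℝ) * lam / ΛminI := by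
  obtain ⟨hmin, hmax⟩ := hIRE c hc
  have hn' : (0 : ℝ) < n := Nat.cast_pos.2 hn
  have hcoef : √(∑ j, c j ^ 2) ≤ √(I.card : ℝ) * lam / ΛminI := by
    have h := sqrt_sum_sq_le_of_normal_eqns X ε hc hnormal (mul_pos hΛminI hn') hmin
      (mul_nonneg hlam.le hn'.le) fun j _ => (div_le_iff₀ hn').1 (hnoise j)
    rwa [← mul_assoc, mul_div_mul_right _ _ hn'.ne'] at h
  have hfit : √(∑ i, (X *ᵥ c) i ^ 2) ≤ √ΛmaxI * √(∑ j, c j ^ 2) * √(n : ℝ) := by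
    calc √(∑ i, (X *ᵥ c) i ^ 2) ≤ √(ΛmaxI * (∑ j, c j ^ 2) * n) :=
          Real.sqrt_le_sqrt (hmax.trans_eq (by ring))
      _ = √ΛmaxI * √(∑ j, c j ^ 2) * √(n : ℝ) := by
          rw [Real.sqrt_mul' _ hn'.le, Real.sqrt_mul' _ (by positivity)]
  calc √(∑ i, (X *ᵥ c) i ^ 2) / √(n : ℝ) ≤ √ΛmaxI * √(∑ j, c j ^ 2) :=
        (div_le_iff₀ (Real.sqrt_pos.2 hn')).2 hfit
    _ ≤ √ΛmaxI * (√(I.card : ℝ) * lam / ΛminI) := by gcongr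
    _ = √ΛmaxI * √(I.card : ℝ) * lam / ΛminI := by ring
end

section
/- Second-stage false positive bound: if β̂^{(1)} satisfies ‖β̂^{(1)} − β‖₂ ≤ λ_{σ,a,p}√s_1/Λ_min(s_1) where s_1 = |Ŝ_1| and supp(β) ⊆ Ŝ_1, and Ŝ_2 = {j ∈ Ŝ_1 : |β̂^{(1)}_j| ≥ 4λ_n√s_1} with λ_n ≥ B·λ_{σ,a,p}, then |Ŝ_2 \ S| ≤ 1/(16 B² Λ_min(s_1)²). -/
/-!
Every false positive `j ∈ Ŝ₂ \ S` has `β j = 0` and `|β̂⁽¹⁾ j| ≥ t₁`, so it contributes at least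
`t₁²` to `‖β̂⁽¹⁾ - β‖₂²`. Hence `|Ŝ₂ \ S| · t₁² ≤ (λ √s₁ / Λ_min)²`, and `t₁ ≥ 4 B λ √s₁`
gives the claim after cancelling `λ² s₁`.
-/

open Finset

theorem card_sdiff_mul_sq_le_sum_sq_sub {ι : Type*} [Fintype ι] [DecidableEq ι]
    {β b : ι → ℝ} {S T : Finset ι} {t : ℝ} (ht : 0 ≤ t)
    (hβ : ∀ j ∉ S, β j = 0) (hT : ∀ j ∈ T, t ≤ |b j|) :
    ((T \ S).card : ℝ) * t ^ 2 ≤ ∑ j, (b j - β j) ^ 2 := by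
  have hterm : ∀ j ∈ T \ S, t ^ 2 ≤ (b j - β j) ^ 2 := by
    intro j hj
    rw [mem_sdiff] at hj
    rw [hβ j hj.2, sub_zero, ← sq_abs (b j)]
    exact pow_le_pow_left₀ ht (hT j hj.1) 2
  calc ((T \ S).card : ℝ) * t ^ 2 = (T \ S).card • t ^ 2 := (nsmul_eq_mul _ _).symm
    _ ≤ ∑ j ∈ T \ S, (b j - β j) ^ 2 := card_nsmul_le_sum _ _ _ hterm
    _ ≤ ∑ j, (b j - β j) ^ 2 :=
      sum_le_sum_of_subset_of_nonneg (subset_univ _) fun j _ _ => sq_nonneg _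

theorem le_one_div_of_mul_sq_threshold_le {c s B lam lamn Λ : ℝ} (hc : 0 ≤ c) (hs : 0 < s)
    (hB : 0 < B) (hlam : 0 < lam) (hΛ : 0 < Λ) (hlamn : B * lam ≤ lamn)
    (h : c * (4 * lamn * √s) ^ 2 ≤ (lam * √s / Λ) ^ 2) :
    c ≤ 1 / (16 * B ^ 2 * Λ ^ 2) := by
  have hsq : √s ^ 2 = s := Real.sq_sqrt hs.le
  have hthreshold : (4 * (B * lam) * √s) ^ 2 ≤ (4 * lamn * √s) ^ 2 := by gcongr
  have hcancel : c * (16 * B ^ 2 * Λ ^ 2) * (lam ^ 2 * s) ≤ 1 * (lam ^ 2 * s) := by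
    have := (mul_le_mul_of_nonneg_left hthreshold hc).trans h
    simp only [div_pow, mul_pow, hsq] at this
    rw [le_div_iff₀ (by positivity)] at this
    linear_combination this
  rw [le_div_iff₀ (by positivity)]
  exact le_of_mul_le_mul_right hcancel (by positivity)

theorem stmt18_general (p : ℕ) (β b1 : Fin p → ℝ)
    (S S1 : Finset (Fin p)) (hS : ∀ j, j ∈ S ↔ β j ≠ 0)
    (B lamn lam Λmin : ℝ) (hB : 1 ≤ B) (hlam : 0 < lam)
    (hlamn : B * lam ≤ lamn) (hΛmin : 0 < Λmin)
    (hloss : Real.sqrt (∑ j, (b1 j - β j) ^ 2) ≤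
      lam * Real.sqrt (S1.card : ℝ) / Λmin)
    (S2 : Finset (Fin p))
    (hS2 : ∀ j, j ∈ S2 ↔ (j ∈ S1 ∧ 4 * lamn * Real.sqrt (S1.card : ℝ) ≤ |b1 j|)) :
    ((S2 \ S).card : ℝ) ≤ 1 / (16 * B ^ 2 * Λmin ^ 2) := by
  rcases S1.eq_empty_or_nonempty with hS1 | hS1
  · have hS2empty : S2 = ∅ := eq_empty_of_forall_notMem fun j hj => by
      simpa [hS1] using ((hS2 j).mp hj).1
    simp only [hS2empty, empty_sdiff, card_empty, Nat.cast_zero, one_div]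
    positivity
  have hB0 : 0 < B := by linarith
  have hlamn0 : 0 ≤ lamn := (mul_pos hB0 hlam).le.trans hlamn
  have hcount := card_sdiff_mul_sq_le_sum_sq_sub (T := S2) (b := b1) (by positivity)
    (fun j hj => by_contra fun h => hj ((hS j).mpr h)) (fun j hj => ((hS2 j).mp hj).2)
  exact le_one_div_of_mul_sq_threshold_le (Nat.cast_nonneg _) (by exact_mod_cast hS1.card_pos)
    hB0 hlam hΛmin hlamn (hcount.trans (Real.sqrt_le_iff.mp hloss).2)

/-- Second-stage false positive bound. -/
theorem stmt18 (p : ℕ) (β b1 : Fin p → ℝ)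
    (S S1 : Finset (Fin p)) (hS : ∀ j, j ∈ S ↔ β j ≠ 0) (hSsub : S ⊆ S1)
    (hb1supp : ∀ j ∉ S1, b1 j = 0)
    (B lamn lam Λmin : ℝ) (hB : 1 ≤ B) (hlam : 0 < lam)
    (hlamn : B * lam ≤ lamn) (hΛmin : 0 < Λmin)
    (hloss : Real.sqrt (∑ j, (b1 j - β j) ^ 2) ≤
      lam * Real.sqrt (S1.card : ℝ) / Λmin)
    (S2 : Finset (Fin p))
    (hS2 : ∀ j, j ∈ S2 ↔ (j ∈ S1 ∧ 4 * lamn * Real.sqrt (S1.card : ℝ) ≤ |b1 j|)) :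
    ((S2 \ S).card : ℝ) ≤ 1 / (16 * B ^ 2 * Λmin ^ 2) :=
  stmt18_general p β b1 S S1 hS B lamn lam Λmin hB hlam hlamn hΛmin hloss S2 hS2
end
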